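/- arXiv:2407.14624 — 7 statements merged into one kernel-verified Lean document; each statement's English description precedes it below -/
import Mathlib

section
/- For every odd integer k ≥ 3, every element of Z_2 can be written as the sum of at most two k-th powers, and 2 is not itself a k-th power in Z_2; hence the Waring number g_{Z_2}(k) equals 2. -/
/-- The Waring number `g_R(k)`: the least positive integer `g` such that every element of the
additive semigroup generated by the `k`-th powers of `R` is a sum of at most `g` `k`-th powers. -/
noncomputable def waringNumber (R : Type*) [CommRing R] (k : ℕ) : ℕ :=
  sInf {g | 0 < g ∧ ∀ x ∈ AddSubsemigroup.closure {y : R | ∃ z : R, z ^ k = y},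
    ∃ f : Fin g → R, x = ∑ i, f i ^ k}

lemma two_dvd_or_sub_one (x : ℤ_[2]) : (2 : ℤ_[2]) ∣ x ∨ (2 : ℤ_[2]) ∣ (x - 1) := by
  have key : ∀ y : ℤ_[2], PadicInt.toZMod y = 0 → (2 : ℤ_[2]) ∣ y := by
    intro y hy
    have : y ∈ RingHom.ker (PadicInt.toZMod : ℤ_[2] →+* ZMod 2) := hy
    rw [PadicInt.ker_toZMod, PadicInt.maximalIdeal_eq_span_p, Ideal.mem_span_singleton] at this
    simpa using this
  have h : ∀ a : ZMod 2, a = 0 ∨ a = 1 := by decide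
  rcases h (PadicInt.toZMod x) with h0 | h1
  · exact Or.inl (key x h0)
  · refine Or.inr (key _ ?_)
    simp [map_sub, h1]

lemma unit_is_pow (k : ℕ) (hodd : Odd k) (u : ℤ_[2]) (hu : ¬ (2 : ℤ_[2]) ∣ u) :
    ∃ z : ℤ_[2], z ^ k = u := by
  have hk0 : k ≠ 0 := by rintro rfl; exact (Nat.not_odd_iff_even.mpr Even.zero) hodd
  set F : Polynomial ℤ_[2] := Polynomial.X ^ k - Polynomial.C u with hF
  have heval : F.eval 1 = 1 - u := by simp [hF]
  have hderiv : F.derivative.eval 1 = (k : ℤ_[2]) := by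
    simp [hF, Polynomial.derivative_pow]
  have hnormk : ‖(k : ℤ_[2])‖ = 1 := by
    have h1 : ¬ ((2 : ℤ) ∣ (k : ℤ)) := by
      obtain ⟨m, hm⟩ := hodd
      omega
    have := (PadicInt.norm_int_lt_one_iff_dvd (p := 2) (k : ℤ)).not.mpr h1
    push_neg at this
    have hle : ‖((k : ℤ) : ℤ_[2])‖ ≤ 1 := PadicInt.norm_le_one _
    have : ‖((k : ℤ) : ℤ_[2])‖ = 1 := le_antisymm hle this
    simpa using this
  have hlt : ‖F.eval 1‖ < ‖F.derivative.eval 1‖ ^ 2 := by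
    rw [heval, hderiv, hnormk, one_pow]
    rw [norm_sub_rev, PadicInt.norm_lt_one_iff_dvd]
    rcases two_dvd_or_sub_one u with h | h
    · exact absurd h hu
    · exact h
  obtain ⟨z, hz, -⟩ := hensels_lemma hlt
  refine ⟨z, ?_⟩
  have : z ^ k - u = 0 := by simpa [hF] using hz
  exact sub_eq_zero.mp this

/-- For every odd integer `k ≥ 3`, every element of `ℤ_[2]` is a sum of at most two `k`-th
powers, `2` is not a `k`-th power in `ℤ_[2]`, and hence `g_{ℤ_2}(k) = 2`. -/
theorem gZ2_odd (k : ℕ) (hodd : Odd k) (hk : 3 ≤ k) :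
    (∀ x : ℤ_[2], ∃ a b : ℤ_[2], x = a ^ k + b ^ k) ∧
    (¬ ∃ y : ℤ_[2], y ^ k = 2) ∧
    waringNumber ℤ_[2] k = 2 := by
  have hk0 : k ≠ 0 := by omega
  have h2prime : Prime (2 : ℤ_[2]) := by
    have := PadicInt.prime_p (p := 2)
    simpa using this
  have part1 : ∀ x : ℤ_[2], ∃ a b : ℤ_[2], x = a ^ k + b ^ k := by
    intro x
    rcases two_dvd_or_sub_one x with h | h
    · have hnd : ¬ (2 : ℤ_[2]) ∣ (x - 1) := by
        intro hd
        have h1 : (2 : ℤ_[2]) ∣ 1 := by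
          have := dvd_sub h hd
          simpa using this
        exact h2prime.not_unit (isUnit_of_dvd_one h1)
      obtain ⟨z, hz⟩ := unit_is_pow k hodd _ hnd
      exact ⟨z, 1, by rw [hz, one_pow]; ring⟩
    · have hnd : ¬ (2 : ℤ_[2]) ∣ x := by
        intro hd
        have h1 : (2 : ℤ_[2]) ∣ 1 := by
          have := dvd_sub hd h
          simpa using this
        exact h2prime.not_unit (isUnit_of_dvd_one h1)
      obtain ⟨z, hz⟩ := unit_is_pow k hodd _ hnd
      exact ⟨z, 0, by rw [hz, zero_pow hk0, add_zero]⟩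
  have part2 : ¬ ∃ y : ℤ_[2], y ^ k = 2 := by
    rintro ⟨y, hy⟩
    have hdvd : (2 : ℤ_[2]) ∣ y := h2prime.dvd_of_dvd_pow (n := k) (by rw [hy])
    obtain ⟨c, rfl⟩ := hdvd
    have h2k : (2 : ℤ_[2]) ^ k = 2 * 2 ^ (k - 1) := by
      conv_lhs => rw [show k = (k - 1) + 1 by omega]
      rw [pow_succ]
      ring
    have hcancel : (2 : ℤ_[2]) ^ (k - 1) * c ^ k = 1 := by
      have h2ne : (2 : ℤ_[2]) ≠ 0 := h2prime.ne_zero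
      apply mul_left_cancel₀ h2ne
      rw [mul_one]
      calc (2 : ℤ_[2]) * (2 ^ (k - 1) * c ^ k) = 2 ^ k * c ^ k := by rw [h2k]; ring
        _ = (2 * c) ^ k := (mul_pow 2 c k).symm
        _ = 2 := hy
    have hd1 : (2 : ℤ_[2]) ∣ 1 := by
      exact dvd_trans (dvd_pow_self 2 (by omega : k - 1 ≠ 0)) ⟨c ^ k, hcancel.symm⟩
    exact h2prime.not_unit (isUnit_of_dvd_one hd1)
  refine ⟨part1, part2, ?_⟩
  have h2mem : 2 ∈ {g | 0 < g ∧ ∀ x ∈ AddSubsemigroup.closure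
      {y : ℤ_[2] | ∃ z : ℤ_[2], z ^ k = y}, ∃ f : Fin g → ℤ_[2], x = ∑ i, f i ^ k} := by
    refine ⟨by norm_num, fun x _ => ?_⟩
    obtain ⟨a, b, hab⟩ := part1 x
    exact ⟨![a, b], by simpa [Fin.sum_univ_two] using hab⟩
  unfold waringNumber
  refine le_antisymm (Nat.sInf_le h2mem) (le_csInf ⟨2, h2mem⟩ ?_)
  rintro n ⟨hn0, hn⟩
  by_contra hlt
  push_neg at hlt
  interval_cases n
  have h2cl : (2 : ℤ_[2]) ∈ AddSubsemigroup.closure {y : ℤ_[2] | ∃ z : ℤ_[2], z ^ k = y} := by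
    have h1 : (1 : ℤ_[2]) ∈ {y : ℤ_[2] | ∃ z : ℤ_[2], z ^ k = y} := ⟨1, one_pow k⟩
    have := AddSubsemigroup.add_mem _ (AddSubsemigroup.subset_closure h1)
      (AddSubsemigroup.subset_closure h1)
    simpa [one_add_one_eq_two] using this
  obtain ⟨f, hf⟩ := hn 2 h2cl
  exact part2 ⟨f 0, by simpa [Fin.sum_univ_one] using hf.symm⟩
end

section
/- Every element of Z_2 can be written as the sum of at most 15 fourth powers of 2-adic integers; combined with the fact that 15 requires 15 fourth powers, the Waring number g_{Z_2}(4) equals 15. -/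
section aux

open Polynomial

lemma gZ2aux_norm_two : ‖(2 : ℤ_[2])‖ = 2⁻¹ := by
  simpa using PadicInt.norm_p (p := 2)

/-- Square roots of elements close to 1 in ℤ₂. -/
lemma gZ2aux_sqrt (u : ℤ_[2]) (h : ‖u - 1‖ < 4⁻¹) :
    ∃ s : ℤ_[2], s ^ 2 = u ∧ ‖s - 1‖ < 2⁻¹ := by
  have hd : ((X ^ 2 - C u : Polynomial ℤ_[2]).derivative).eval 1 = 2 := by
    simp [derivative_pow]
  have he : (X ^ 2 - C u : Polynomial ℤ_[2]).eval 1 = 1 - u := by simp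
  have hnorm : ‖(X ^ 2 - C u : Polynomial ℤ_[2]).eval 1‖ <
      ‖((X ^ 2 - C u : Polynomial ℤ_[2]).derivative).eval 1‖ ^ 2 := by
    rw [he, hd, gZ2aux_norm_two, norm_sub_rev]
    calc ‖u - 1‖ < 4⁻¹ := h
    _ = (2⁻¹ : ℝ) ^ 2 := by norm_num
  obtain ⟨z, hz, hz1, -, -⟩ := hensels_lemma hnorm
  rw [Polynomial.coe_aeval_eq_eval, hd, gZ2aux_norm_two] at hz1
  refine ⟨z, ?_, hz1⟩
  have : z ^ 2 - u = 0 := by simpa using hz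
  exact sub_eq_zero.mp this

/-- Fourth roots of elements ≡ 1 mod 16 in ℤ₂. -/
lemma gZ2aux_fourth (u : ℤ_[2]) (h : ‖u - 1‖ ≤ 16⁻¹) :
    ∃ z : ℤ_[2], z ^ 4 = u := by
  obtain ⟨s, hs, hs1⟩ := gZ2aux_sqrt u (lt_of_le_of_lt h (by norm_num))
  -- ‖s + 1‖ = 1/2
  have hne : ‖s - 1‖ ≠ ‖(2 : ℤ_[2])‖ := by
    rw [gZ2aux_norm_two]; exact ne_of_lt hs1
  have hsp : ‖s + 1‖ = 2⁻¹ := by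
    have : s + 1 = (s - 1) + 2 := by ring
    rw [this, PadicInt.norm_add_eq_max_of_ne hne, gZ2aux_norm_two]
    exact max_eq_right (le_of_lt hs1)
  have hmul : ‖s - 1‖ * ‖s + 1‖ = ‖u - 1‖ := by
    rw [← norm_mul]
    congr 1
    rw [← hs]; ring
  have hs1' : ‖s - 1‖ < 4⁻¹ := by
    rw [hsp] at hmul
    nlinarith [norm_nonneg (s - 1)]
  obtain ⟨t, ht, -⟩ := gZ2aux_sqrt s hs1'
  exact ⟨t, by rw [show (4 : ℕ) = 2 * 2 from rfl, pow_mul, ht, hs]⟩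

/-- dvd by 16 vs norm. -/
lemma gZ2aux_dvd_iff (a : ℤ_[2]) : (16 : ℤ_[2]) ∣ a ↔ ‖a‖ ≤ 16⁻¹ := by
  have h16 : (16 : ℤ_[2]) = (2 : ℤ_[2]) ^ 4 := by norm_num
  have := PadicInt.norm_le_pow_iff_mem_span_pow a 4 (p := 2)
  rw [Ideal.mem_span_singleton] at this
  push_cast at this
  rw [h16, ← this]
  constructor <;> intro h <;> [
    (calc ‖a‖ ≤ (2:ℝ)^(-4:ℤ) := h
      _ = 16⁻¹ := by norm_num);
    (calc ‖a‖ ≤ (16:ℝ)⁻¹ := h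
      _ = (2:ℝ)^(-4:ℤ) := by norm_num)]

lemma gZ2aux_sum_repr (s : ℕ) (hs : s ≤ 14) (z : ℤ_[2]) :
    ∃ f : Fin 15 → ℤ_[2], z ^ 4 + s = ∑ i, f i ^ 4 := by
  interval_cases s
  · exact ⟨![z, 0, 0, 0, 0, 0, 0, 0, 0, 0, 0, 0, 0, 0, 0], by simp [Fin.sum_univ_succ]⟩
  · exact ⟨![z, 1, 0, 0, 0, 0, 0, 0, 0, 0, 0, 0, 0, 0, 0], by simp [Fin.sum_univ_succ]⟩
  · exact ⟨![z, 1, 1, 0, 0, 0, 0, 0, 0, 0, 0, 0, 0, 0, 0], by simp [Fin.sum_univ_succ]; ring⟩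
  · exact ⟨![z, 1, 1, 1, 0, 0, 0, 0, 0, 0, 0, 0, 0, 0, 0], by simp [Fin.sum_univ_succ]; ring⟩
  · exact ⟨![z, 1, 1, 1, 1, 0, 0, 0, 0, 0, 0, 0, 0, 0, 0], by simp [Fin.sum_univ_succ]; ring⟩
  · exact ⟨![z, 1, 1, 1, 1, 1, 0, 0, 0, 0, 0, 0, 0, 0, 0], by simp [Fin.sum_univ_succ]; ring⟩
  · exact ⟨![z, 1, 1, 1, 1, 1, 1, 0, 0, 0, 0, 0, 0, 0, 0], by simp [Fin.sum_univ_succ]; ring⟩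
  · exact ⟨![z, 1, 1, 1, 1, 1, 1, 1, 0, 0, 0, 0, 0, 0, 0], by simp [Fin.sum_univ_succ]; ring⟩
  · exact ⟨![z, 1, 1, 1, 1, 1, 1, 1, 1, 0, 0, 0, 0, 0, 0], by simp [Fin.sum_univ_succ]; ring⟩
  · exact ⟨![z, 1, 1, 1, 1, 1, 1, 1, 1, 1, 0, 0, 0, 0, 0], by simp [Fin.sum_univ_succ]; ring⟩
  · exact ⟨![z, 1, 1, 1, 1, 1, 1, 1, 1, 1, 1, 0, 0, 0, 0], by simp [Fin.sum_univ_succ]; ring⟩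
  · exact ⟨![z, 1, 1, 1, 1, 1, 1, 1, 1, 1, 1, 1, 0, 0, 0], by simp [Fin.sum_univ_succ]; ring⟩
  · exact ⟨![z, 1, 1, 1, 1, 1, 1, 1, 1, 1, 1, 1, 1, 0, 0], by simp [Fin.sum_univ_succ]; ring⟩
  · exact ⟨![z, 1, 1, 1, 1, 1, 1, 1, 1, 1, 1, 1, 1, 1, 0], by simp [Fin.sum_univ_succ]; ring⟩
  · exact ⟨![z, 1, 1, 1, 1, 1, 1, 1, 1, 1, 1, 1, 1, 1, 1], by simp [Fin.sum_univ_succ]; ring⟩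

/-- Any `w` not divisible by 16 is a sum of 15 fourth powers. -/
lemma gZ2aux_main (w : ℤ_[2]) (hw : ¬ (16 : ℤ_[2]) ∣ w) :
    ∃ f : Fin 15 → ℤ_[2], w = ∑ i, f i ^ 4 := by
  set r : ℕ := w.appr 4 with hr
  have hspec := PadicInt.appr_spec 4 w
  rw [Ideal.mem_span_singleton] at hspec
  have h16 : (16 : ℤ_[2]) = (2 : ℤ_[2]) ^ 4 := by norm_num
  have hdvd : (16 : ℤ_[2]) ∣ w - r := by rw [h16]; exact hspec
  have hrpos : 1 ≤ r := by
    rcases Nat.eq_zero_or_pos r with h0 | h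
    · exfalso; apply hw; simpa [h0] using hdvd
    · exact h
  have hrlt : r < 16 := by
    have := PadicInt.appr_lt w 4 (p := 2)
    simpa using this
  obtain ⟨z, hz⟩ := gZ2aux_fourth (w - (r - 1 : ℕ)) (by
    rw [← gZ2aux_dvd_iff]
    have : w - ((r - 1 : ℕ) : ℤ_[2]) - 1 = w - r := by
      have : ((r - 1 : ℕ) : ℤ_[2]) = (r : ℤ_[2]) - 1 := by
        have := Nat.cast_sub (R := ℤ_[2]) hrpos
        simpa using this
      rw [this]; ring
    rw [this]
    exact hdvd)
  obtain ⟨f, hf⟩ := gZ2aux_sum_repr (r - 1) (by omega) z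
  refine ⟨f, ?_⟩
  rw [← hf, hz]
  ring

end aux

/-- Every element of `ℤ_[2]` is a sum of at most 15 fourth powers, and `g_{ℤ_2}(4) = 15`. -/
theorem gZ2_four :
    (∀ x : ℤ_[2], ∃ f : Fin 15 → ℤ_[2], x = ∑ i, f i ^ 4) ∧
    waringNumber ℤ_[2] 4 = 15 := by
  have main : ∀ x : ℤ_[2], ∃ f : Fin 15 → ℤ_[2], x = ∑ i, f i ^ 4 := by
    intro x
    rcases eq_or_ne x 0 with rfl | hx
    · exact ⟨0, by simp⟩
    · set v : ℕ := x.valuation with hv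
      have hx2 : x = (PadicInt.unitCoeff hx : ℤ_[2]) * 2 ^ v := by exact_mod_cast PadicInt.unitCoeff_spec hx
      set q : ℕ := v / 4
      set s : ℕ := v % 4
      have hvq : v = 4 * q + s := (Nat.div_add_mod v 4).symm
      set w : ℤ_[2] := (PadicInt.unitCoeff hx : ℤ_[2]) * 2 ^ s with hwdef
      have hxw : x = (2 ^ q) ^ 4 * w := by
        rw [hx2, hwdef, hvq, mul_comm 4 q, pow_add, pow_mul]
        ring
      have hw : ¬ (16 : ℤ_[2]) ∣ w := by
        intro hdvd
        obtain ⟨c, hc⟩ := hdvd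
        have hnorm : ‖w‖ ≤ 16⁻¹ := (gZ2aux_dvd_iff w).mp ⟨c, hc⟩
        have hwn : ‖w‖ = (2 : ℝ)⁻¹ ^ s := by
          rw [hwdef, norm_mul]
          rw [PadicInt.norm_units]
          rw [one_mul, norm_pow, gZ2aux_norm_two]
        rw [hwn] at hnorm
        have hs3 : s ≤ 3 := Nat.lt_succ_iff.mp (Nat.mod_lt v (by norm_num))
        interval_cases s <;> norm_num at hnorm
      obtain ⟨f, hf⟩ := gZ2aux_main w hw
      refine ⟨fun i => 2 ^ q * f i, ?_⟩
      rw [hxw, hf, Finset.mul_sum]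
      congr 1
      ext i
      ring
  refine ⟨main, ?_⟩
  -- the set
  have h15mem : (15 : ℕ) ∈ {g | 0 < g ∧ ∀ x ∈ AddSubsemigroup.closure
      {y : ℤ_[2] | ∃ z : ℤ_[2], z ^ 4 = y}, ∃ f : Fin g → ℤ_[2], x = ∑ i, f i ^ 4} := by
    exact ⟨by norm_num, fun x _ => main x⟩
  have hnat : ∀ n : ℕ, ((n + 1 : ℕ) : ℤ_[2]) ∈ AddSubsemigroup.closure
      {y : ℤ_[2] | ∃ z : ℤ_[2], z ^ 4 = y} := by
    intro n
    induction n with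
    | zero => exact AddSubsemigroup.subset_closure ⟨1, by norm_num⟩
    | succ k ih =>
      have h1 : (1 : ℤ_[2]) ∈ AddSubsemigroup.closure {y : ℤ_[2] | ∃ z : ℤ_[2], z ^ 4 = y} :=
        AddSubsemigroup.subset_closure ⟨1, by norm_num⟩
      have h2 := AddSubsemigroup.add_mem _ ih h1
      have heq : (((k + 1) + 1 : ℕ) : ℤ_[2]) = ((k + 1 : ℕ) : ℤ_[2]) + 1 := by push_cast; ring
      rw [heq]
      exact h2
  have hlb : ∀ g ∈ {g | 0 < g ∧ ∀ x ∈ AddSubsemigroup.closure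
      {y : ℤ_[2] | ∃ z : ℤ_[2], z ^ 4 = y}, ∃ f : Fin g → ℤ_[2], x = ∑ i, f i ^ 4},
      15 ≤ g := by
    rintro g ⟨-, hg⟩
    by_contra hlt
    push_neg at hlt
    have hg14 : g ≤ 14 := by omega
    obtain ⟨f, hf⟩ := hg (15 : ℤ_[2]) (by
      simpa using hnat 14)
    -- map to ZMod (2^4)
    set φ := @PadicInt.toZModPow 2 _ 4 with hφ
    have hmap : (15 : ZMod (2 ^ 4)) = ∑ i, (φ (f i)) ^ 4 := by
      have := congrArg φ hf
      rw [map_sum] at this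
      simpa [map_ofNat] using this
    have hsq : ∀ a : ZMod (2 ^ 4), a ^ 4 = 0 ∨ a ^ 4 = 1 := by decide
    have heach : ∀ i, (φ (f i)) ^ 4 = if (φ (f i)) ^ 4 = 1 then 1 else 0 := by
      intro i
      rcases hsq (φ (f i)) with h | h
      · rw [h, if_neg (by decide : ¬ (0 : ZMod (2 ^ 4)) = 1)]
      · rw [h, if_pos rfl]
    have hsum : ∑ i, (φ (f i)) ^ 4 =
        ((Finset.univ.filter fun i => (φ (f i)) ^ 4 = 1).card : ZMod (2 ^ 4)) := by
      rw [Finset.sum_congr rfl (fun i _ => heach i), Finset.sum_boole]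
    set m := (Finset.univ.filter fun i => (φ (f i)) ^ 4 = 1).card with hm
    have hmg : m ≤ g := le_trans (Finset.card_filter_le _ _) (by simp)
    have h15m : (15 : ZMod (2 ^ 4)) = (m : ZMod (2 ^ 4)) := by rw [hmap, hsum]
    have hval : ((m : ZMod (2 ^ 4))).val = m := ZMod.val_cast_of_lt (by norm_num; omega)
    have h15val : ((15 : ZMod (2 ^ 4))).val = 15 := by decide
    rw [h15m, hval] at h15val
    omega
  exact le_antisymm (Nat.sInf_le h15mem) (le_csInf ⟨15, h15mem⟩ hlb)
end

section
/- Let k ≡ 2 mod 4 with k ≥ 6. Every element of Z_2 is a sum of at most 8 k-th powers of 2-adic integers, and any element a ∈ Z_2 with a ≡ 8 mod 16 cannot be written as a sum of fewer than 8 k-th powers; hence g_{Z_2}(k) = 8. -/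
section aux


private lemma hensel_pow_z2 (k : ℕ) (hk4 : k % 4 = 2) (c : ℤ_[2]) (h : (8:ℤ_[2]) ∣ c - 1) :
    ∃ z : ℤ_[2], z ^ k = c := by
  have hk0 : k ≠ 0 := by omega
  set F : Polynomial ℤ_[2] := Polynomial.X ^ k - Polynomial.C c with hF
  have hev1 : F.eval 1 = 1 - c := by simp [hF]
  have hder : F.derivative.eval 1 = (k : ℤ_[2]) := by
    simp [hF, Polynomial.derivative_X_pow]
  have hmodd : ¬ ((2:ℤ) ∣ ((k / 2 : ℕ) : ℤ)) := by omega
  have hnm : ‖((k / 2 : ℕ) : ℤ_[2])‖ = 1 := by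
    have h2 : ¬ ‖(((k/2:ℕ):ℤ) : ℤ_[2])‖ < 1 :=
      fun hh => hmodd ((PadicInt.norm_int_lt_one_iff_dvd _).mp hh)
    rw [Int.cast_natCast] at h2
    have h3 : ‖((k / 2 : ℕ) : ℤ_[2])‖ ≤ 1 := PadicInt.norm_le_one _
    rcases lt_or_eq_of_le h3 with h4 | h4
    · exact absurd h4 h2
    · exact h4
  have hknorm : ‖(k : ℤ_[2])‖ = 2⁻¹ := by
    have hcast : (k : ℤ_[2]) = 2 * ((k/2 : ℕ) : ℤ_[2]) := by
      exact_mod_cast congrArg (Nat.cast : ℕ → ℤ_[2]) (by omega : k = 2 * (k/2))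
    rw [hcast, norm_mul, hnm, mul_one]
    simpa using PadicInt.norm_p (p := 2)
  have hcnorm : ‖c - 1‖ ≤ ((2:ℕ):ℝ) ^ (-(3:ℕ) : ℤ) :=
    (PadicInt.norm_le_pow_iff_mem_span_pow (c-1) 3).mpr
      (Ideal.mem_span_singleton.mpr (by
        simpa [show ((2:ℤ_[2])^3 = 8) by norm_num] using h))
  have hnorm : ‖F.eval 1‖ < ‖F.derivative.eval 1‖ ^ 2 := by
    rw [hev1, hder, hknorm]
    calc ‖(1:ℤ_[2]) - c‖ = ‖c - 1‖ := by rw [show (1:ℤ_[2]) - c = -(c - 1) by ring, norm_neg]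
    _ ≤ ((2:ℕ):ℝ) ^ (-(3:ℕ) : ℤ) := hcnorm
    _ < (2:ℝ)⁻¹ ^ 2 := by norm_num
  obtain ⟨z, hz, -⟩ := hensels_lemma hnorm
  exact ⟨z, sub_eq_zero.mp (by simpa [hF] using hz)⟩

/-- Every element of `ℤ_[2]` is a sum of eight `k`-th powers. -/
private lemma sum_eight_powers (k : ℕ) (hk4 : k % 4 = 2) (hk : 6 ≤ k) (x : ℤ_[2]) :
    ∃ f : Fin 8 → ℤ_[2], x = ∑ i, f i ^ k := by
  have hk0 : k ≠ 0 := by omega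
  -- find m ≤ 7 with 8 ∣ x - (m+1)
  obtain ⟨m, hm7, hdvd⟩ : ∃ m : ℕ, m ≤ 7 ∧ (8:ℤ_[2]) ∣ x - ((m:ℤ_[2]) + 1) := by
    set v : ℕ := ((PadicInt.toZModPow 3 x) : ZMod (2^3)).val with hv
    have hvlt : v < 8 := (PadicInt.toZModPow 3 x).val_lt
    refine ⟨if v = 0 then 7 else v - 1, by split <;> omega, ?_⟩
    have hval : ((v : ℕ) : ZMod (2^3)) = PadicInt.toZModPow 3 x := by
      rw [hv, ZMod.natCast_val, ZMod.cast_id]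
    have hcast : (((if v = 0 then 7 else v - 1 : ℕ) + 1 : ℕ) : ZMod (2^3)) =
        PadicInt.toZModPow 3 x := by
      rw [← hval, ZMod.natCast_eq_natCast_iff]
      have : ((if v = 0 then 7 else v - 1 : ℕ) + 1) % 2^3 = v % 2^3 := by split <;> omega
      exact this
    have hker : x - (((if v = 0 then 7 else v - 1 : ℕ) + 1 : ℕ) : ℤ_[2]) ∈
        RingHom.ker (PadicInt.toZModPow (p := 2) 3) := by
      rw [RingHom.mem_ker, map_sub, map_natCast, hcast, sub_self]
    rw [PadicInt.ker_toZModPow, Ideal.mem_span_singleton] at hker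
    norm_num at hker
    convert hker using 2
    push_cast
    ring
  have hdvd' : (8:ℤ_[2]) ∣ (x - (m:ℤ_[2])) - 1 := by
    convert hdvd using 1; ring
  obtain ⟨z, hz⟩ := hensel_pow_z2 k hk4 (x - (m:ℤ_[2])) hdvd'
  interval_cases m <;> norm_num at hz
  · exact ⟨![z,0,0,0,0,0,0,0], by
      simp only [Fin.sum_univ_succ, Fin.sum_univ_zero, Matrix.cons_val_zero,
        Matrix.cons_val_succ, zero_pow hk0, one_pow, hz]; ring⟩
  · exact ⟨![1,z,0,0,0,0,0,0], by
      simp only [Fin.sum_univ_succ, Fin.sum_univ_zero, Matrix.cons_val_zero,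
        Matrix.cons_val_succ, zero_pow hk0, one_pow, hz]; ring⟩
  · exact ⟨![1,1,z,0,0,0,0,0], by
      simp only [Fin.sum_univ_succ, Fin.sum_univ_zero, Matrix.cons_val_zero,
        Matrix.cons_val_succ, zero_pow hk0, one_pow, hz]; ring⟩
  · exact ⟨![1,1,1,z,0,0,0,0], by
      simp only [Fin.sum_univ_succ, Fin.sum_univ_zero, Matrix.cons_val_zero,
        Matrix.cons_val_succ, zero_pow hk0, one_pow, hz]; ring⟩
  · exact ⟨![1,1,1,1,z,0,0,0], by
      simp only [Fin.sum_univ_succ, Fin.sum_univ_zero, Matrix.cons_val_zero,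
        Matrix.cons_val_succ, zero_pow hk0, one_pow, hz]; ring⟩
  · exact ⟨![1,1,1,1,1,z,0,0], by
      simp only [Fin.sum_univ_succ, Fin.sum_univ_zero, Matrix.cons_val_zero,
        Matrix.cons_val_succ, zero_pow hk0, one_pow, hz]; ring⟩
  · exact ⟨![1,1,1,1,1,1,z,0], by
      simp only [Fin.sum_univ_succ, Fin.sum_univ_zero, Matrix.cons_val_zero,
        Matrix.cons_val_succ, zero_pow hk0, one_pow, hz]; ring⟩
  · exact ⟨![1,1,1,1,1,1,1,z], by
      simp only [Fin.sum_univ_succ, Fin.sum_univ_zero, Matrix.cons_val_zero,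
        Matrix.cons_val_succ, zero_pow hk0, one_pow, hz]; ring⟩

private lemma zmod16_pow (k : ℕ) (hk4 : k % 4 = 2) (hk : 6 ≤ k) (x : ZMod 16) :
    x ^ k = 0 ∨ x ^ k = 1 ∨ x ^ k = 9 := by
  obtain ⟨j, hj1, hj⟩ : ∃ j : ℕ, 1 ≤ j ∧ k = 4 * j + 2 := ⟨k / 4, by omega, by omega⟩
  have hxk : x ^ k = (x ^ 4) ^ j * x ^ 2 := by
    rw [hj, pow_add, pow_mul]
  have hd1 : ∀ y : ZMod 16, y^4 = 0 ∨ y^4 = 1 := by decide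
  have hd2 : ∀ y : ZMod 16, y^4 = 1 → y^2 = 1 ∨ y^2 = 9 := by decide
  rcases hd1 x with h4 | h4
  · left
    rw [hxk, h4, zero_pow (by omega), zero_mul]
  · have := hd2 x h4
    rw [hxk, h4, one_pow, one_mul]
    tauto

private lemma sum_of_zmod16 : ∀ (n : ℕ) (g : Fin n → ZMod 16),
    (∀ i, g i = 0 ∨ g i = 1 ∨ g i = 9) →
    ∃ j e : ℕ, j + e ≤ n ∧ ∑ i, g i = (j : ZMod 16) + 9 * e := by
  intro n
  induction n with
  | zero => intro g _; exact ⟨0, 0, by simp⟩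
  | succ n ih =>
    intro g hg
    obtain ⟨j, e, hje, hsum⟩ := ih (fun i => g i.succ) (fun i => hg i.succ)
    rw [Fin.sum_univ_succ]
    rcases hg 0 with h0 | h0 | h0
    · exact ⟨j, e, by omega, by rw [h0, hsum]; ring⟩
    · exact ⟨j + 1, e, by omega, by rw [h0, hsum]; push_cast; ring⟩
    · exact ⟨j, e + 1, by omega, by rw [h0, hsum]; push_cast; ring⟩

private lemma not_sum_seven (k : ℕ) (hk4 : k % 4 = 2) (hk : 6 ≤ k) (a : ℤ_[2])
    (ha : (16 : ℤ_[2]) ∣ a - 8) : ¬ ∃ f : Fin 7 → ℤ_[2], a = ∑ i, f i ^ k := by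
  rintro ⟨f, hf⟩
  set φ : ℤ_[2] →+* ZMod (2^4) := PadicInt.toZModPow 4 with hφ
  have hφa : φ a = (8 : ZMod (2^4)) := by
    have hker : a - 8 ∈ RingHom.ker φ := by
      rw [hφ, PadicInt.ker_toZModPow, Ideal.mem_span_singleton]
      norm_num
      exact ha
    rw [RingHom.mem_ker, map_sub, sub_eq_zero] at hker
    rw [hker, show (8:ℤ_[2]) = ((8:ℕ):ℤ_[2]) by norm_num, map_natCast]
    norm_num
  have hsum : φ a = ∑ i : Fin 7, (φ (f i)) ^ k := by
    rw [hf, map_sum]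
    simp
  obtain ⟨j, e, hje, hsum16⟩ := sum_of_zmod16 7 (fun i => (φ (f i)) ^ k)
    (fun i => zmod16_pow k hk4 hk (φ (f i)))
  rw [← hsum, hφa] at hsum16
  have h8 : ((8:ℕ) : ZMod 16) = ((j + 9 * e : ℕ) : ZMod 16) := by
    push_cast
    rw [hsum16]
  rw [ZMod.natCast_eq_natCast_iff] at h8
  have h8' : 8 % 16 = (j + 9 * e) % 16 := h8
  omega

end aux

/-- For `k ≡ 2 mod 4` with `k ≥ 6`: every element of `ℤ_[2]` is a sum of at most 8 `k`-th
powers, any `a ≡ 8 mod 16` is not a sum of fewer than 8 `k`-th powers, and `g_{ℤ_2}(k) = 8`. -/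
theorem gZ2_k_eq_eight (k : ℕ) (hk4 : k % 4 = 2) (hk : 6 ≤ k) :
    (∀ x : ℤ_[2], ∃ f : Fin 8 → ℤ_[2], x = ∑ i, f i ^ k) ∧
    (∀ a : ℤ_[2], (16 : ℤ_[2]) ∣ a - 8 → ¬ ∃ f : Fin 7 → ℤ_[2], a = ∑ i, f i ^ k) ∧
    waringNumber ℤ_[2] k = 8 := by
  have hk0 : k ≠ 0 := by omega
  refine ⟨sum_eight_powers k hk4 hk, fun a ha => not_sum_seven k hk4 hk a ha, ?_⟩
  have h8mem : 8 ∈ {g | 0 < g ∧ ∀ x ∈ AddSubsemigroup.closure {y : ℤ_[2] | ∃ z : ℤ_[2], z ^ k = y},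
      ∃ f : Fin g → ℤ_[2], x = ∑ i, f i ^ k} :=
    ⟨by norm_num, fun x _ => sum_eight_powers k hk4 hk x⟩
  rw [waringNumber]
  refine le_antisymm (Nat.sInf_le h8mem) (le_csInf ⟨8, h8mem⟩ ?_)
  rintro g ⟨hg0, hg⟩
  by_contra hlt
  push_neg at hlt
  have hg7 : g ≤ 7 := by omega
  -- 8 ∈ closure
  have h1mem : (1:ℤ_[2]) ∈ AddSubsemigroup.closure {y : ℤ_[2] | ∃ z : ℤ_[2], z ^ k = y} :=
    AddSubsemigroup.subset_closure ⟨1, one_pow k⟩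
  have h8cl : (8:ℤ_[2]) ∈ AddSubsemigroup.closure {y : ℤ_[2] | ∃ z : ℤ_[2], z ^ k = y} := by
    have : (8:ℤ_[2]) = 1+1+1+1+1+1+1+1 := by norm_num
    rw [this]
    exact AddSubsemigroup.add_mem _ (AddSubsemigroup.add_mem _ (AddSubsemigroup.add_mem _
      (AddSubsemigroup.add_mem _ (AddSubsemigroup.add_mem _ (AddSubsemigroup.add_mem _
      (AddSubsemigroup.add_mem _ h1mem h1mem) h1mem) h1mem) h1mem) h1mem) h1mem) h1mem
  obtain ⟨f, hf⟩ := hg 8 h8cl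
  -- extend f to Fin 7
  set F : ℕ → ℤ_[2] := fun i => if h : i < g then f ⟨i, h⟩ else 0 with hF
  refine not_sum_seven k hk4 hk 8 (by simp) ⟨fun i => F i, ?_⟩
  have e1 : ∑ i : Fin 7, F (i : ℕ) ^ k = ∑ i ∈ Finset.range 7, F i ^ k :=
    Fin.sum_univ_eq_sum_range (fun i => F i ^ k) 7
  have e2 : ∑ i ∈ Finset.range 7, F i ^ k = ∑ i ∈ Finset.range g, F i ^ k := by
    refine (Finset.sum_subset (Finset.range_subset_range.mpr hg7) ?_).symm
    intro i _ hi
    rw [Finset.mem_range] at hi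
    rw [hF]
    simp only [dif_neg hi]
    exact zero_pow hk0
  have e3 : ∑ i ∈ Finset.range g, F i ^ k = ∑ i : Fin g, f i ^ k := by
    rw [← Fin.sum_univ_eq_sum_range (fun i => F i ^ k) g]
    refine Finset.sum_congr rfl fun i _ => ?_
    rw [hF]
    simp only [dif_pos i.isLt, Fin.eta]
  rw [e1, e2, e3, ← hf]
end

section
/- Let p be prime, k > 1 an integer not divisible by p, L a totally ramified finite extension of Q_p with ring of integers O_L and uniformizer π_L, and let g_0 be the minimal number of nonzero k-th powers in Z/pZ summing to 0 mod p. Then every element of π_L·O_L is a sum of at most g_0 k-th powers of elements of O_L. -/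
set_option maxHeartbeats 1000000
set_option synthInstance.maxHeartbeats 200000

open Module

theorem aux_smod_iff {R : Type*} [CommRing R] (a x y : R) (n : ℕ) :
    (x ≡ y [SMOD (Ideal.span {a}) ^ n • (⊤ : Submodule R R)]) ↔ a ^ n ∣ x - y := by
  rw [SModEq.sub_mem, ← Ideal.one_eq_top, smul_eq_mul, mul_one, Ideal.span_singleton_pow,
    Ideal.mem_span_singleton]

theorem zp_haus (p : ℕ) [Fact p.Prime] (c : ℤ_[p]) (hc : ∀ n, (p : ℤ_[p]) ^ n ∣ c) : c = 0 := by
  refine IsHausdorff.haus (inferInstance : IsHausdorff (IsLocalRing.maximalIdeal ℤ_[p]) ℤ_[p])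
    c fun n => ?_
  rw [PadicInt.maximalIdeal_eq_span_p, SModEq.zero, ← Ideal.one_eq_top, smul_eq_mul, mul_one,
    Ideal.span_singleton_pow, Ideal.mem_span_singleton]
  exact hc n

theorem zp_prec (p : ℕ) [Fact p.Prime] (c : ℕ → ℤ_[p])
    (hc : ∀ m n, m ≤ n → (p : ℤ_[p]) ^ m ∣ c n - c m) :
    ∃ l : ℤ_[p], ∀ n, (p : ℤ_[p]) ^ n ∣ c n - l := by
  obtain ⟨l, hl⟩ := IsPrecomplete.prec
    (inferInstance : IsPrecomplete (IsLocalRing.maximalIdeal ℤ_[p]) ℤ_[p]) (f := c) (by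
      intro m n hmn
      rw [PadicInt.maximalIdeal_eq_span_p, aux_smod_iff]
      exact (dvd_sub_comm).mp (hc m n hmn))
  refine ⟨l, fun n => ?_⟩
  have := hl n
  rw [PadicInt.maximalIdeal_eq_span_p, aux_smod_iff] at this
  exact this

theorem aux_complete (p : ℕ) [Fact p.Prime] (L : Type*) [Field L] [Algebra ℚ_[p] L]
    [FiniteDimensional ℚ_[p] L] [Algebra ℤ_[p] L] [IsScalarTower ℤ_[p] ℚ_[p] L]
    (π : integralClosure ℤ_[p] L) (e : ℕ) (he : 1 ≤ e)
    (hram : Associated ((p : integralClosure ℤ_[p] L)) (π ^ e)) :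
    IsAdicComplete (Ideal.span {π}) (integralClosure ℤ_[p] L) := by
  haveI : Module.IsTorsionFree ℤ_[p] L := by
    refine Module.isTorsionFree_iff_algebraMap_injective.mpr ?_
    rw [IsScalarTower.algebraMap_eq ℤ_[p] ℚ_[p] L]
    exact (algebraMap ℚ_[p] L).injective.comp (IsFractionRing.injective ℤ_[p] ℚ_[p])
  haveI : Module.Finite ℤ_[p] (integralClosure ℤ_[p] L) := IsIntegralClosure.finite ℤ_[p] ℚ_[p] L (integralClosure ℤ_[p] L)
  haveI : Module.Free ℤ_[p] (integralClosure ℤ_[p] L) := IsIntegralClosure.module_free ℤ_[p] ℚ_[p] L (integralClosure ℤ_[p] L)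
  classical
  let b : Basis (Module.Free.ChooseBasisIndex ℤ_[p] (integralClosure ℤ_[p] L)) ℤ_[p] (integralClosure ℤ_[p] L) := Module.Free.chooseBasis ℤ_[p] (integralClosure ℤ_[p] L)
  -- scalar action
  have key : ∀ (y : integralClosure ℤ_[p] L) (n : ℕ), (p : integralClosure ℤ_[p] L) ^ n * y = ((p : ℤ_[p]) ^ n) • y := by
    intro y n
    rw [Algebra.smul_def, map_pow, map_natCast]
  -- coordinatewise characterisation of divisibility by p^n
  have mem_iff : ∀ (x : integralClosure ℤ_[p] L) (n : ℕ),
      (p : integralClosure ℤ_[p] L) ^ n ∣ x ↔ ∀ i, (p : ℤ_[p]) ^ n ∣ b.repr x i := by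
    intro x n
    constructor
    · rintro ⟨y, rfl⟩ i
      rw [key, map_smul]
      exact ⟨b.repr y i, rfl⟩
    · intro h
      choose c hc using h
      refine ⟨∑ i, c i • b i, ?_⟩
      rw [key, Finset.smul_sum]
      have : ∀ i, (p : ℤ_[p]) ^ n • c i • b i = b.repr x i • b i := by
        intro i; rw [smul_smul, ← hc i]
      rw [Finset.sum_congr rfl fun i _ => this i, b.sum_repr]
  -- divisibility by powers of p and of π
  have dvd_iff : ∀ (x : integralClosure ℤ_[p] L) (n : ℕ), (p : integralClosure ℤ_[p] L) ^ n ∣ x ↔ π ^ (e * n) ∣ x := by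
    intro x n
    rw [pow_mul]
    exact ⟨fun h => (hram.pow_pow.dvd_iff_dvd_left).mp h,
      fun h => (hram.pow_pow.dvd_iff_dvd_left).mpr h⟩
  refine { toIsHausdorff := ⟨?_⟩, toIsPrecomplete := ⟨?_⟩ }
  · -- Hausdorff
    intro x hx
    have hx' : ∀ n, (p : integralClosure ℤ_[p] L) ^ n ∣ x := by
      intro n
      rw [dvd_iff]
      have := (aux_smod_iff π x 0 (e * n)).mp (hx (e * n))
      rwa [sub_zero] at this
    have : ∀ i, b.repr x i = 0 := fun i => zp_haus p _ fun n => (mem_iff x n).mp (hx' n) i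
    have hb : b.repr x = 0 := Finsupp.ext this
    exact (LinearEquiv.map_eq_zero_iff b.repr).mp hb
  · -- Precomplete
    intro f hf
    have hf' : ∀ m n, m ≤ n → π ^ m ∣ f n - f m := by
      intro m n hmn
      have := hf hmn
      rw [aux_smod_iff] at this
      exact dvd_sub_comm.mp this
    -- the subsequence f (e * n) is p-adically Cauchy in coordinates
    have hcoord : ∀ i, ∃ l : ℤ_[p], ∀ n, (p : ℤ_[p]) ^ n ∣ b.repr (f (e * n)) i - l := by
      intro i
      refine zp_prec p (fun n => b.repr (f (e * n)) i) ?_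
      intro m n hmn
      have h1 : (p : integralClosure ℤ_[p] L) ^ m ∣ f (e * n) - f (e * m) := by
        rw [dvd_iff]
        exact hf' (e * m) (e * n) (Nat.mul_le_mul_left e hmn)
      have := (mem_iff _ m).mp h1 i
      rwa [map_sub, Finsupp.sub_apply] at this
    choose l hl using hcoord
    set y : integralClosure ℤ_[p] L := ∑ i, l i • b i with hy
    have hyrepr : ∀ i, b.repr y i = l i := by
      intro i
      rw [hy, map_sum]
      rw [Finset.sum_apply']
      rw [Finset.sum_eq_single i]
      · simp [Basis.repr_self]
      · intro j _ hj
        simp [Basis.repr_self, Finsupp.single_apply, hj]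
      · intro h; exact absurd (Finset.mem_univ i) h
    refine ⟨y, fun n => ?_⟩
    rw [aux_smod_iff]
    have h1 : (p : integralClosure ℤ_[p] L) ^ n ∣ f (e * n) - y := by
      rw [mem_iff]
      intro i
      have h4 : (b.repr (f (e * n) - y)) i = b.repr (f (e * n)) i - l i := by
        rw [map_sub, Finsupp.sub_apply, hyrepr i]
      rw [h4]
      exact hl i n
    have h2 : π ^ n ∣ f (e * n) - y :=
      dvd_trans (pow_dvd_pow π (Nat.le_mul_of_pos_left n he)) ((dvd_iff _ n).mp h1)
    have h3 : π ^ n ∣ f (e * n) - f n := hf' n (e * n) (Nat.le_mul_of_pos_left n he)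
    have : f n - y = (f (e * n) - y) - (f (e * n) - f n) := by ring
    rw [this]
    exact dvd_sub h2 h3


/-- Let `p` be prime, `k > 1` not divisible by `p`, `L` a totally ramified finite extension of
`ℚ_[p]` of degree `e` with ring of integers `𝒪_L` (the integral closure of `ℤ_[p]` in `L`) and
uniformizer `π` (total ramification: `p` is associated to `π ^ e`).  If `g₀` is the minimal
number of nonzero `k`-th powers in `ℤ/pℤ` summing to `0`, then every element of `π • 𝒪_L` is a
sum of at most `g₀` `k`-th powers of elements of `𝒪_L`. -/
theorem sum_g0_kth_powers (p : ℕ) [Fact p.Prime] (k : ℕ) (hk : 1 < k) (hpk : ¬ p ∣ k)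
    (L : Type*) [Field L] [Algebra ℚ_[p] L] [FiniteDimensional ℚ_[p] L]
    [Algebra ℤ_[p] L] [IsScalarTower ℤ_[p] ℚ_[p] L]
    (e : ℕ) (he : Module.finrank ℚ_[p] L = e)
    (π : integralClosure ℤ_[p] L) (hπ : Irreducible π)
    (hram : Associated ((p : integralClosure ℤ_[p] L)) (π ^ e))
    (g₀ : ℕ)
    (hg₀ : IsLeast {n | 0 < n ∧ ∃ y : Fin n → ZMod p,
      (∀ i, y i ≠ 0) ∧ ∑ i, y i ^ k = 0} g₀)
    (z : integralClosure ℤ_[p] L) (hz : π ∣ z) :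
    ∃ f : Fin g₀ → integralClosure ℤ_[p] L, z = ∑ i, f i ^ k := by
  classical
  obtain ⟨⟨hg_pos, y, hy_ne, hy_sum⟩, -⟩ := hg₀
  have he1 : 1 ≤ e := by
    rw [← he]
    exact Module.finrank_pos
  haveI := aux_complete p L π e he1 hram
  haveI : HenselianRing (integralClosure ℤ_[p] L) (Ideal.span {π}) := inferInstance
  haveI : NeZero g₀ := ⟨hg_pos.ne'⟩
  -- the lifts of the residues
  set a : Fin g₀ → integralClosure ℤ_[p] L := fun i => ((y i).val : integralClosure ℤ_[p] L)
    with ha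
  have hπp : π ∣ (p : integralClosure ℤ_[p] L) :=
    (dvd_pow_self π (Nat.one_le_iff_ne_zero.mp he1)).trans hram.symm.dvd
  -- π divides the sum of k-th powers of the lifts
  have hsN : (p : ℕ) ∣ ∑ i, (y i).val ^ k := by
    refine (ZMod.natCast_eq_zero_iff _ p).mp ?_
    push_cast
    simpa [ZMod.natCast_val, ZMod.cast_id] using hy_sum
  have hs : π ∣ ∑ i, a i ^ k := by
    have h1 : ((∑ i, (y i).val ^ k : ℕ) : integralClosure ℤ_[p] L) = ∑ i, a i ^ k := by
      push_cast [ha]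
      rfl
    have h2 : (p : integralClosure ℤ_[p] L) ∣ ∑ i, a i ^ k := by
      rw [← h1]
      exact_mod_cast Nat.cast_dvd_cast (α := integralClosure ℤ_[p] L) hsN
    exact hπp.trans h2
  -- the inverse of k * a 0 ^ (k - 1) modulo π
  have hk0 : (k : ZMod p) ≠ 0 := by
    simpa [ZMod.natCast_eq_zero_iff] using hpk
  have hu : (k : ZMod p) * (y 0) ^ (k - 1) ≠ 0 :=
    mul_ne_zero hk0 (pow_ne_zero _ (hy_ne 0))
  set m : ZMod p := ((k : ZMod p) * (y 0) ^ (k - 1))⁻¹ with hm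
  have hminv : m * ((k : ZMod p) * (y 0) ^ (k - 1)) = 1 := inv_mul_cancel₀ hu
  have hdvd_unit : π ∣ ((m.val : integralClosure ℤ_[p] L) *
      ((k : integralClosure ℤ_[p] L) * a 0 ^ (k - 1)) - 1) := by
    have hZ : (p : ℤ) ∣ ((m.val * (k * (y 0).val ^ (k - 1)) : ℕ) : ℤ) - 1 := by
      rw [← ZMod.intCast_zmod_eq_zero_iff_dvd]
      push_cast
      simp only [ZMod.natCast_val, ZMod.cast_id]
      rw [hminv]
      ring
    obtain ⟨c0, hc0⟩ := hZ
    have h2 := congrArg (fun x : ℤ => (x : integralClosure ℤ_[p] L)) hc0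
    push_cast at h2
    refine hπp.trans ⟨(c0 : integralClosure ℤ_[p] L), ?_⟩
    rw [ha]
    linear_combination h2
  -- Hensel's lemma
  set A : integralClosure ℤ_[p] L := a 0 with hA
  set c : integralClosure ℤ_[p] L := (∑ i, a i ^ k) - A ^ k - z with hc
  set F : Polynomial (integralClosure ℤ_[p] L) :=
    (Polynomial.X + Polynomial.C A) ^ k + Polynomial.C c with hF
  have hdegpow : ((Polynomial.X + Polynomial.C A) ^ k).degree = (k : WithBot ℕ) := by
    rw [Polynomial.degree_pow, Polynomial.degree_X_add_C]
    simp
  have hmonic : F.Monic := by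
    refine ((Polynomial.monic_X_add_C A).pow k).add_of_left ?_
    rw [hdegpow]
    refine lt_of_le_of_lt Polynomial.degree_C_le ?_
    exact_mod_cast Nat.zero_lt_one.trans hk
  have heval0 : F.eval 0 ∈ Ideal.span {π} := by
    have : F.eval 0 = (∑ i, a i ^ k) - z := by
      rw [hF, Polynomial.eval_add, Polynomial.eval_pow, Polynomial.eval_add, Polynomial.eval_X,
        Polynomial.eval_C, Polynomial.eval_C, hc]
      ring
    rw [this, Ideal.mem_span_singleton]
    exact dvd_sub hs hz
  have hderiv : (Polynomial.derivative F).eval 0 =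
      (k : integralClosure ℤ_[p] L) * A ^ (k - 1) := by
    simp [hF, Polynomial.derivative_pow]
  have hunit : IsUnit (Ideal.Quotient.mk (Ideal.span {π}) ((Polynomial.derivative F).eval 0)) := by
    rw [hderiv]
    refine IsUnit.of_mul_eq_one (Ideal.Quotient.mk _ (m.val : integralClosure ℤ_[p] L)) ?_
    rw [← map_mul, ← map_one (Ideal.Quotient.mk (Ideal.span {π})), Ideal.Quotient.eq,
      Ideal.mem_span_singleton]
    have : (k : integralClosure ℤ_[p] L) * A ^ (k - 1) * (m.val : integralClosure ℤ_[p] L) - 1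
        = (m.val : integralClosure ℤ_[p] L) *
          ((k : integralClosure ℤ_[p] L) * a 0 ^ (k - 1)) - 1 := by
      rw [hA]; ring
    rw [this]
    exact hdvd_unit
  obtain ⟨t, hroot, -⟩ := HenselianRing.is_henselian F hmonic 0 heval0 hunit
  have hroot' : (t + A) ^ k + c = 0 := by
    have := hroot
    simp [Polynomial.IsRoot, hF] at this
    convert this using 2
  -- assemble the answer
  refine ⟨Function.update a 0 (t + A), ?_⟩
  have hupd : ∀ i, (Function.update a 0 (t + A)) i ^ k
      = Function.update (fun j => a j ^ k) 0 ((t + A) ^ k) i := by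
    intro i
    exact Function.apply_update (fun _ x => x ^ k) a 0 (t + A) i
  rw [Finset.sum_congr rfl fun i _ => hupd i, Finset.sum_update_of_mem (Finset.mem_univ 0),
    Finset.sdiff_singleton_eq_erase]
  have hsplit : a 0 ^ k + ∑ i ∈ Finset.univ.erase (0 : Fin g₀), a i ^ k = ∑ i, a i ^ k :=
    Finset.add_sum_erase _ (fun i => a i ^ k) (Finset.mem_univ (0 : Fin g₀))
  have hroot'' : (t + A) ^ k = (A ^ k + z) - ∑ i, a i ^ k := by
    rw [hc] at hroot'
    linear_combination hroot'
  rw [hroot'', hA]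
  linear_combination -hsplit
end

section
/- Let p be prime, k > 1 an integer not divisible by p, L a totally ramified finite extension of Q_p with ring of integers O_L and uniformizer π_L, and let g_0 be the minimal number of nonzero k-th powers in Z/pZ summing to 0 mod p. Then π_L cannot be written as the sum of fewer than g_0 k-th powers of elements of O_L. -/
set_option maxHeartbeats 1000000
set_option synthInstance.maxHeartbeats 1000000

/-- Short-exact-sequence counting step: `|R/(π)^(m+1)| = |R/(π)^m| * |R/(π)|`. -/
lemma card_quot_span_pow_succ {R : Type*} [CommRing R] [IsDomain R] (π : R) (hπ : π ≠ 0)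
    (m : ℕ) :
    Nat.card (R ⧸ Ideal.span {π} ^ (m + 1)) =
      Nat.card (R ⧸ Ideal.span {π} ^ m) * Nat.card (R ⧸ Ideal.span {π}) := by
  set I : Ideal R := Ideal.span {π} with hI
  have hle : I ^ (m + 1) ≤ I ^ m := Ideal.pow_le_pow_right (Nat.le_succ m)
  -- the factor map
  let ψ : (R ⧸ I ^ (m + 1)) →ₗ[R] R ⧸ I ^ m :=
    Submodule.mapQ _ _ LinearMap.id hle
  have hψmk : ∀ x : R, ψ (Submodule.Quotient.mk x) = Submodule.Quotient.mk x := fun _ => rfl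
  have hψs : Function.Surjective ψ := by
    intro x
    obtain ⟨a, rfl⟩ := Submodule.Quotient.mk_surjective _ x
    exact ⟨Submodule.Quotient.mk a, rfl⟩
  -- multiplication by π^m
  have hcmp : I ≤ Submodule.comap ((π ^ m) • (LinearMap.id : R →ₗ[R] R)) (I ^ (m + 1)) := by
    intro x hx
    simp only [Submodule.mem_comap, LinearMap.smul_apply, LinearMap.id_apply, smul_eq_mul]
    rw [pow_succ]
    exact Ideal.mul_mem_mul (Ideal.pow_mem_pow (Ideal.mem_span_singleton_self π) m) hx
  let φ : (R ⧸ I) →ₗ[R] R ⧸ I ^ (m + 1) :=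
    Submodule.mapQ _ _ ((π ^ m) • LinearMap.id) hcmp
  have hφmk : ∀ x : R, φ (Submodule.Quotient.mk x) = Submodule.Quotient.mk (π ^ m * x) :=
    fun _ => rfl
  have hφinj : Function.Injective φ := by
    intro a b hab
    obtain ⟨x, rfl⟩ := Submodule.Quotient.mk_surjective _ a
    obtain ⟨y, rfl⟩ := Submodule.Quotient.mk_surjective _ b
    rw [hφmk, hφmk, Submodule.Quotient.eq] at hab
    have hmem : π ^ m * x - π ^ m * y ∈ Ideal.span {π ^ (m + 1)} := by
      rw [← Ideal.span_singleton_pow, ← hI]; exact hab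
    obtain ⟨t, ht⟩ := Ideal.mem_span_singleton.mp hmem
    have hxy : x - y = π * t := by
      apply mul_left_cancel₀ (pow_ne_zero m hπ)
      rw [mul_sub, ht, pow_succ]
      ring
    rw [Submodule.Quotient.eq]
    rw [hxy]
    exact Ideal.mul_mem_right t _ (Ideal.mem_span_singleton_self π)
  -- range of φ is the kernel of ψ
  have hrange : ∀ x : R ⧸ I ^ (m + 1), ψ x = 0 ↔ x ∈ LinearMap.range φ := by
    intro x
    obtain ⟨a, rfl⟩ := Submodule.Quotient.mk_surjective _ x
    constructor
    · intro h
      have ha : a ∈ Ideal.span {π ^ m} := by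
        rw [← Ideal.span_singleton_pow]
        rwa [hψmk, Submodule.Quotient.mk_eq_zero] at h
      obtain ⟨b, hb⟩ := Ideal.mem_span_singleton.mp ha
      exact ⟨Submodule.Quotient.mk b, by rw [hφmk, ← hb]⟩
    · rintro ⟨c, hc⟩
      obtain ⟨b, rfl⟩ := Submodule.Quotient.mk_surjective _ c
      rw [← hc, hφmk, hψmk, Submodule.Quotient.mk_eq_zero]
      rw [hI, Ideal.span_singleton_pow]
      exact Ideal.mem_span_singleton.mpr (Dvd.intro b rfl)
  -- assemble cardinalities
  have h1 := AddSubgroup.card_eq_card_quotient_mul_card_addSubgroup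
    (AddMonoidHom.ker ψ.toAddMonoidHom)
  have h2 : Nat.card ((R ⧸ I ^ (m + 1)) ⧸ AddMonoidHom.ker ψ.toAddMonoidHom)
      = Nat.card (R ⧸ I ^ m) :=
    Nat.card_congr (QuotientAddGroup.quotientKerEquivOfSurjective ψ.toAddMonoidHom hψs).toEquiv
  have h3 : Nat.card (AddMonoidHom.ker ψ.toAddMonoidHom) = Nat.card (R ⧸ I) := by
    refine Nat.card_congr (Equiv.symm ?_)
    refine (LinearEquiv.ofInjective φ hφinj).toEquiv.trans (Equiv.setCongr ?_)
    ext x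
    constructor
    · intro hx
      exact (hrange x).mpr hx
    · intro hx
      exact (hrange x).mp hx
  rw [h1, h2, h3]

/-- Telescoped counting: `|R/(π)^m| = |R/(π)|^m`. -/
lemma card_quot_span_pow {R : Type*} [CommRing R] [IsDomain R] (π : R) (hπ : π ≠ 0) (m : ℕ) :
    Nat.card (R ⧸ Ideal.span {π} ^ m) = Nat.card (R ⧸ Ideal.span {π}) ^ m := by
  induction m with
  | zero =>
    rw [pow_zero, pow_zero, Ideal.one_eq_top]
    haveI : Subsingleton (R ⧸ (⊤ : Ideal R)) :=
      Submodule.Quotient.subsingleton_iff.mpr rfl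
    exact Nat.card_eq_one_iff_unique.mpr ⟨inferInstance, ⟨0⟩⟩
  | succ m ih =>
    rw [card_quot_span_pow_succ π hπ m, ih, pow_succ]

/-- Let `p` be prime, `k > 1` not divisible by `p`, `L` a totally ramified finite extension of
`ℚ_[p]` of degree `e` with ring of integers `𝒪_L` and uniformizer `π`.  If `g₀` is the minimal
number of nonzero `k`-th powers in `ℤ/pℤ` summing to `0`, then `π` cannot be written as a sum
of fewer than `g₀` `k`-th powers of elements of `𝒪_L`. -/
theorem uniformizer_needs_g0_powers (p : ℕ) [Fact p.Prime] (k : ℕ) (hk : 1 < k) (hpk : ¬ p ∣ k)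
    (L : Type*) [Field L] [Algebra ℚ_[p] L] [FiniteDimensional ℚ_[p] L]
    [Algebra ℤ_[p] L] [IsScalarTower ℤ_[p] ℚ_[p] L]
    (e : ℕ) (he : Module.finrank ℚ_[p] L = e)
    (π : integralClosure ℤ_[p] L) (hπ : Irreducible π)
    (hram : Associated ((p : integralClosure ℤ_[p] L)) (π ^ e))
    (g₀ : ℕ)
    (hg₀ : IsLeast {n | 0 < n ∧ ∃ y : Fin n → ZMod p,
      (∀ i, y i ≠ 0) ∧ ∑ i, y i ^ k = 0} g₀)
    (n : ℕ) (hn : n < g₀) :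
    ¬ ∃ f : Fin n → integralClosure ℤ_[p] L, π = ∑ i, f i ^ k := by
  classical
  rintro ⟨f, hf⟩
  have hπ0 : π ≠ 0 := hπ.ne_zero
  have he1 : 0 < e := by rw [← he]; exact Module.finrank_pos
  set I : Ideal (integralClosure ℤ_[p] L) := Ideal.span {π} with hIdef
  -- `ℤ_p ⧸ (p) ≃ ZMod p`
  have hker : RingHom.ker (PadicInt.toZMod (p := p)) = Ideal.span {(p : ℤ_[p])} := by
    rw [PadicInt.ker_toZMod, PadicInt.maximalIdeal_eq_span_p]
  have hsurj0 : Function.Surjective (PadicInt.toZMod (p := p)) := by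
    intro x
    obtain ⟨a, rfl⟩ := ZMod.natCast_zmod_surjective x
    exact ⟨(a : ℤ_[p]), map_natCast _ a⟩
  let σ₀ : (ℤ_[p] ⧸ Ideal.span {(p : ℤ_[p])}) ≃+* ZMod p :=
    (Ideal.quotEquivOfEq hker.symm).trans (RingHom.quotientKerEquivOfSurjective hsurj0)
  have hcard0 : Nat.card (ℤ_[p] ⧸ Ideal.span {(p : ℤ_[p])}) = p := by
    rw [Nat.card_congr σ₀.toEquiv, Nat.card_zmod]
  -- instances
  haveI : IsNoetherian ℤ_[p] (integralClosure ℤ_[p] L) := IsIntegralClosure.isNoetherian ℤ_[p] ℚ_[p] L (integralClosure ℤ_[p] L)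
  haveI : IsFractionRing (integralClosure ℤ_[p] L) L := integralClosure.isFractionRing_of_finite_extension ℚ_[p] L
  haveI hmax : (Ideal.span {(p : ℤ_[p])}).IsMaximal := by
    rw [← PadicInt.maximalIdeal_eq_span_p]; infer_instance
  -- degree of the residue field extension
  have hmap : Ideal.map (algebraMap ℤ_[p] (integralClosure ℤ_[p] L)) (Ideal.span {(p : ℤ_[p])})
      = Ideal.span {((p:ℕ) : integralClosure ℤ_[p] L)} := by
    rw [Ideal.map_span, Set.image_singleton, map_natCast]
  have hfr : Module.finrank (ℤ_[p] ⧸ Ideal.span {(p : ℤ_[p])})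
      ((integralClosure ℤ_[p] L) ⧸ Ideal.map (algebraMap ℤ_[p] (integralClosure ℤ_[p] L)) (Ideal.span {(p : ℤ_[p])})) = e := by
    rw [Ideal.finrank_quotient_map (Ideal.span {(p : ℤ_[p])}) ℚ_[p] L, he]
  -- cardinality of `(integralClosure ℤ_[p] L) ⧸ pR`
  letI : Field (ℤ_[p] ⧸ Ideal.span {(p : ℤ_[p])}) := Ideal.Quotient.field _
  haveI : Finite (ℤ_[p] ⧸ Ideal.span {(p : ℤ_[p])}) := Finite.of_equiv _ σ₀.toEquiv.symm
  haveI : Module.Finite ℤ_[p]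
      ((integralClosure ℤ_[p] L) ⧸ Ideal.map (algebraMap ℤ_[p] (integralClosure ℤ_[p] L)) (Ideal.span {(p : ℤ_[p])})) :=
    Module.Finite.of_surjective
      (IsScalarTower.toAlgHom ℤ_[p] (integralClosure ℤ_[p] L)
        ((integralClosure ℤ_[p] L) ⧸ Ideal.map (algebraMap ℤ_[p] (integralClosure ℤ_[p] L)) (Ideal.span {(p : ℤ_[p])}))).toLinearMap
      Ideal.Quotient.mk_surjective
  haveI : Module.Finite (ℤ_[p] ⧸ Ideal.span {(p : ℤ_[p])})
      ((integralClosure ℤ_[p] L) ⧸ Ideal.map (algebraMap ℤ_[p] (integralClosure ℤ_[p] L)) (Ideal.span {(p : ℤ_[p])})) :=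
    Module.Finite.of_restrictScalars_finite ℤ_[p] _ _
  haveI : Finite ((integralClosure ℤ_[p] L) ⧸ Ideal.map (algebraMap ℤ_[p] (integralClosure ℤ_[p] L)) (Ideal.span {(p : ℤ_[p])})) :=
    Module.finite_of_finite (ℤ_[p] ⧸ Ideal.span {(p : ℤ_[p])})
  have hcardpR : Nat.card
      ((integralClosure ℤ_[p] L) ⧸ Ideal.map (algebraMap ℤ_[p] (integralClosure ℤ_[p] L)) (Ideal.span {(p : ℤ_[p])})) = p ^ e := by
    letI := Fintype.ofFinite (ℤ_[p] ⧸ Ideal.span {(p : ℤ_[p])})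
    letI := Fintype.ofFinite
      ((integralClosure ℤ_[p] L) ⧸ Ideal.map (algebraMap ℤ_[p] (integralClosure ℤ_[p] L)) (Ideal.span {(p : ℤ_[p])}))
    rw [Nat.card_eq_fintype_card,
      Module.card_eq_pow_finrank (K := ℤ_[p] ⧸ Ideal.span {(p : ℤ_[p])}), hfr,
      ← Nat.card_eq_fintype_card, hcard0]
  -- `pR = I ^ e`
  have hJ : Ideal.map (algebraMap ℤ_[p] (integralClosure ℤ_[p] L)) (Ideal.span {(p : ℤ_[p])}) = I ^ e := by
    rw [hmap, Ideal.span_singleton_eq_span_singleton.mpr hram, hIdef,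
      Ideal.span_singleton_pow]
  -- `|(integralClosure ℤ_[p] L) ⧸ I| = p`
  have hc : Nat.card ((integralClosure ℤ_[p] L) ⧸ I) = p := by
    have h1 : Nat.card ((integralClosure ℤ_[p] L) ⧸ I) ^ e = p ^ e := by
      rw [← card_quot_span_pow π hπ0 e, ← hIdef, ← hJ, hcardpR]
    exact Nat.pow_left_injective he1.ne' h1
  -- the residue ring is nontrivial and finite
  have hItop : I ≠ ⊤ := fun h => hπ.not_isUnit (Ideal.span_singleton_eq_top.mp (hIdef ▸ h))
  haveI : Nontrivial ((integralClosure ℤ_[p] L) ⧸ I) := Ideal.Quotient.nontrivial_iff.mpr hItop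
  haveI : Finite ((integralClosure ℤ_[p] L) ⧸ I) := Nat.finite_of_card_ne_zero (by
    rw [hc]; exact (Fact.out : p.Prime).pos.ne')
  -- `π` divides `p` in `(integralClosure ℤ_[p] L)`
  have hpI : ((p:ℕ) : integralClosure ℤ_[p] L) ∈ I := by
    have hdvd : π ∣ ((p:ℕ) : integralClosure ℤ_[p] L) :=
      (dvd_pow_self π he1.ne').trans hram.symm.dvd
    exact hIdef ▸ Ideal.mem_span_singleton.mpr hdvd
  -- the residue map `ZMod p →+* (integralClosure ℤ_[p] L) ⧸ I`
  have hlift : ∀ a ∈ Ideal.span {(p : ℤ_[p])},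
      ((Ideal.Quotient.mk I).comp (algebraMap ℤ_[p] (integralClosure ℤ_[p] L))) a = 0 := by
    intro a ha
    obtain ⟨b, rfl⟩ := Ideal.mem_span_singleton.mp ha
    show Ideal.Quotient.mk I (algebraMap ℤ_[p] (integralClosure ℤ_[p] L) ((p : ℤ_[p]) * b)) = 0
    rw [_root_.map_mul, _root_.map_natCast, Ideal.Quotient.eq_zero_iff_mem]
    exact Ideal.mul_mem_right _ _ hpI
  let ρ : ZMod p →+* (integralClosure ℤ_[p] L) ⧸ I :=
    (Ideal.Quotient.lift (Ideal.span {(p : ℤ_[p])})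
      ((Ideal.Quotient.mk I).comp (algebraMap ℤ_[p] (integralClosure ℤ_[p] L))) hlift).comp σ₀.symm.toRingHom
  have hρbij : Function.Bijective ρ :=
    (Nat.bijective_iff_injective_and_card ρ).mpr ⟨ρ.injective, by rw [Nat.card_zmod, hc]⟩
  let σ : ZMod p ≃+* (integralClosure ℤ_[p] L) ⧸ I := RingEquiv.ofBijective ρ hρbij
  -- residues of the `f i`
  set q : (integralClosure ℤ_[p] L) →+* (integralClosure ℤ_[p] L) ⧸ I := Ideal.Quotient.mk I with hq
  set y : Fin n → ZMod p := fun i => σ.symm (q (f i)) with hy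
  have hyi : ∀ i, σ (y i) = q (f i) := fun i => σ.apply_symm_apply _
  have hqπ : q π = 0 :=
    Ideal.Quotient.eq_zero_iff_mem.mpr (hIdef ▸ Ideal.mem_span_singleton_self π)
  have hsum : ∑ i, y i ^ k = 0 := by
    apply σ.injective
    rw [map_sum, map_zero]
    have h1 : ∑ i, σ (y i ^ k) = ∑ i, q (f i) ^ k :=
      Finset.sum_congr rfl fun i _ => by rw [map_pow, hyi]
    have h2 : ∑ i, q (f i) ^ k = q (∑ i, f i ^ k) := by
      rw [map_sum]
      exact Finset.sum_congr rfl fun i _ => (map_pow q (f i) k).symm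
    rw [h1, h2, ← hf, hqπ]
  set S : Finset (Fin n) := Finset.univ.filter fun i => y i ≠ 0 with hSdef
  rcases eq_or_ne S ∅ with hS | hS
  · -- all `f i` divisible by `π`: contradiction with `π` irreducible
    have hdvd : ∀ i, π ∣ f i := by
      intro i
      have h0 : y i = 0 := by
        by_contra h
        have hiS : i ∈ S := by simp [hSdef, h]
        rw [hS] at hiS
        exact absurd hiS (Finset.notMem_empty i)
      have hq0 : q (f i) = 0 := by rw [← hyi i, h0, map_zero]
      exact Ideal.mem_span_singleton.mp
        (hIdef ▸ Ideal.Quotient.eq_zero_iff_mem.mp hq0)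
    choose g hg using hdvd
    have heq : π = π ^ k * ∑ i, g i ^ k := by
      have hstep : ∑ i, f i ^ k = π ^ k * ∑ i, g i ^ k := by
        rw [Finset.mul_sum]
        exact Finset.sum_congr rfl fun i _ => by rw [hg i, mul_pow]
      exact hf.trans hstep
    have h1 : (1 : (integralClosure ℤ_[p] L)) = π ^ (k - 1) * ∑ i, g i ^ k := by
      apply mul_left_cancel₀ hπ0
      rw [mul_one, ← mul_assoc, ← pow_succ', Nat.sub_add_cancel hk.le]
      exact heq
    exact hπ.not_isUnit (isUnit_of_dvd_one
      ((dvd_pow_self π (Nat.sub_ne_zero_of_lt hk)).trans ⟨∑ i, g i ^ k, h1⟩))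
  · -- otherwise, the nonzero residues give too short a representation of `0` in `ZMod p`
    have hSne : S.Nonempty := Finset.nonempty_iff_ne_empty.mpr hS
    have hm0 : 0 < S.card := Finset.card_pos.mpr hSne
    let eqv : Fin S.card ≃ {x // x ∈ S} := S.equivFin.symm
    have hzsum : ∑ j : Fin S.card, y (eqv j) ^ k = 0 := by
      have e1 : ∑ j : Fin S.card, y (eqv j) ^ k = ∑ i ∈ S, y i ^ k := by
        rw [Equiv.sum_comp eqv (fun i : {x // x ∈ S} => y (i : Fin n) ^ k)]
        exact Finset.sum_coe_sort S (fun i => y i ^ k)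
      have e2 : ∑ i ∈ S, y i ^ k = ∑ i, y i ^ k := by
        rw [hSdef]
        exact Finset.sum_filter_of_ne
          (fun x _ hx h0 => hx (by rw [h0, zero_pow (by omega : k ≠ 0)]))
      rw [e1, e2, hsum]
    have hmem : S.card ∈ {n | 0 < n ∧ ∃ y : Fin n → ZMod p,
        (∀ i, y i ≠ 0) ∧ ∑ i, y i ^ k = 0} :=
      ⟨hm0, fun j => y (eqv j),
        fun j => (Finset.mem_filter.mp (eqv j).2).2, hzsum⟩
    have hg₀le := hg₀.2 hmem
    have hmn : S.card ≤ n := by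
      simpa using Finset.card_le_univ S
    omega
end

section
/- The integer 13 cannot be written as the sum of fewer than 13 ninth powers of 3-adic integers, and every element of Z_3 is a sum of at most 13 ninth powers; hence g_{Z_3}(9) = 13. -/
open PadicInt Polynomial Finset

lemma ninth_pow_of (u : ℤ_[3]) (m : ℤ_[3]) (hu : u = 1 + 27 * m) :
    ∃ z : ℤ_[3], z ^ 9 = u := by
  set a : ℤ_[3] := 1 + 3*m - 9*m^2 - 9*m^3 with ha
  have hdvd : (3:ℤ_[3])^5 ∣ a^9 - u := by
    refine ⟨(1)*m^2 + (1)*m^3 + (-38)*m^4 + (-186)*m^5 + (390)*m^6 + (4734)*m^7 + (2889)*m^8 + (-59301)*m^9 + (-111213)*m^10 + (422091)*m^11 + (1256796)*m^12 + (-1606716)*m^13 + (-7811964)*m^14 + (1320948)*m^15 + (28743741)*m^16 + (16159743)*m^17 + (-58215753)*m^18 + (-74696985)*m^19 + (39326634)*m^20 + (130734486)*m^21 + (62710038)*m^22 + (-60584274)*m^23 + (-94065057)*m^24 + (-52612659)*m^25 + (-14348907)*m^26 + (-1594323)*m^27, ?_⟩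
    rw [hu, ha]; ring
  have h3 : ‖(3:ℤ_[3])‖ = ((3:ℕ):ℝ)⁻¹ := by
    have := @PadicInt.norm_p 3 ⟨by norm_num⟩
    simpa using this
  have hnorm1 : ‖a^9 - u‖ ≤ ((3:ℕ):ℝ)^(-(5:ℕ):ℤ) := by
    refine (norm_le_pow_iff_mem_span_pow _ 5).2 (Ideal.mem_span_singleton.2 ?_)
    simpa using hdvd
  have hanorm : ‖a‖ = 1 := by
    have h1 : a = 1 + 3 * (m - 3*m^2 - 3*m^3) := by rw [ha]; ring
    have h2 : ‖(3:ℤ_[3]) * (m - 3*m^2 - 3*m^3)‖ < 1 := by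
      rw [norm_mul]
      calc ‖(3:ℤ_[3])‖ * ‖m - 3*m^2 - 3*m^3‖ ≤ ‖(3:ℤ_[3])‖ * 1 :=
            mul_le_mul_of_nonneg_left (PadicInt.norm_le_one _) (norm_nonneg _)
        _ < 1 := by
            rw [mul_one, h3]; norm_num
    have hne : ‖(1:ℤ_[3])‖ ≠ ‖(3:ℤ_[3]) * (m - 3*m^2 - 3*m^3)‖ := by
      rw [norm_one]; exact fun h => absurd h.symm (ne_of_lt h2)
    rw [h1, PadicInt.norm_add_eq_max_of_ne hne, norm_one]
    exact max_eq_left h2.le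
  set F : Polynomial ℤ_[3] := X^9 - C u with hF
  have hFeval : ∀ z : ℤ_[3], F.eval z = z^9 - u := by intro z; simp [hF]
  have hFder : ∀ z : ℤ_[3], F.derivative.eval z = 9 * z^8 := by
    intro z; simp [hF]; norm_num
  have hder : ‖F.derivative.eval a‖ = ((3:ℕ):ℝ)^(-(2:ℕ):ℤ) := by
    rw [hFder, show (9:ℤ_[3]) = 3^2 by norm_num, norm_mul, norm_pow,
      norm_pow, hanorm, h3]
    norm_num
  have hens : ‖F.eval a‖ < ‖F.derivative.eval a‖ ^ 2 := by
    rw [hFeval, hder]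
    calc ‖a^9 - u‖ ≤ ((3:ℕ):ℝ)^(-(5:ℕ):ℤ) := hnorm1
      _ < (((3:ℕ):ℝ)^(-(2:ℕ):ℤ))^2 := by norm_num
  obtain ⟨z, hz, -⟩ := hensels_lemma hens
  refine ⟨z, ?_⟩
  have := hFeval z
  rw [Polynomial.coe_aeval_eq_eval] at hz
  rw [hz] at this
  exact sub_eq_zero.mp this.symm

lemma rep13 (y v : ℤ_[3]) (hv : v ^ 9 = v) (c : ℕ) (hc : c ≤ 12) (z : ℤ_[3]) (hz : z ^ 9 = y) :
    ∃ f : Fin 13 → ℤ_[3], y + c • v = ∑ i, f i ^ 9 := by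
  classical
  refine ⟨fun i => if (i : ℕ) = 0 then z else if (i : ℕ) ≤ c then v else 0, ?_⟩
  rw [Fin.sum_univ_succ]
  have h0 : ((if ((0 : Fin 13) : ℕ) = 0 then z else if ((0 : Fin 13) : ℕ) ≤ c then v else 0) ^ 9 : ℤ_[3]) = y := by
    simp [hz]
  rw [h0]
  congr 1
  have hstep : ∀ i : Fin 12,
      ((if ((i.succ : Fin 13) : ℕ) = 0 then z else if ((i.succ : Fin 13) : ℕ) ≤ c then v else 0) ^ 9 : ℤ_[3])
        = if (i : ℕ) < c then v else 0 := by
    intro i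
    have hv0 : ((i.succ : Fin 13) : ℕ) = (i : ℕ) + 1 := rfl
    by_cases h : (i : ℕ) < c
    · rw [hv0]
      simp [Nat.succ_le_of_lt h, h, hv]
    · rw [hv0]
      simp [h, Nat.succ_le_iff]
  rw [Finset.sum_congr rfl (fun i _ => hstep i)]
  rw [Fin.sum_univ_eq_sum_range (fun i => if i < c then (v : ℤ_[3]) else 0) 12]
  rw [← Finset.sum_subset (Finset.range_subset_range.2 hc)
    (fun x _ hx => by simp [Finset.mem_range] at hx; simp [hx])]
  symm
  calc ∑ i ∈ Finset.range c, (if i < c then (v:ℤ_[3]) else 0)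
      = ∑ _i ∈ Finset.range c, v :=
        Finset.sum_congr rfl (fun i hi => if_pos (Finset.mem_range.1 hi))
    _ = c • v := by rw [Finset.sum_const, Finset.card_range]


lemma ninth_pow_of' (u m : ℤ_[3]) (hu : u = -1 + 27 * m) : ∃ z : ℤ_[3], z ^ 9 = u := by
  obtain ⟨w, hw⟩ := ninth_pow_of (-u) (-m) (by rw [hu]; ring)
  exact ⟨-w, by rw [Odd.neg_pow ⟨4, by norm_num⟩, hw, neg_neg]⟩

lemma exists_rep (x : ℤ_[3]) : ∃ f : Fin 13 → ℤ_[3], x = ∑ i, f i ^ 9 := by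
  haveI : NeZero (3 ^ 3 : ℕ) := ⟨by norm_num⟩
  set n : ℕ := (PadicInt.toZModPow 3 x).val with hn
  have hnlt : n < 27 := by
    have := ZMod.val_lt (PadicInt.toZModPow 3 x)
    simpa using this
  have hker : x - (n : ℤ_[3]) ∈ RingHom.ker (PadicInt.toZModPow (p := 3) 3) := by
    rw [RingHom.mem_ker, map_sub, map_natCast, hn, ZMod.natCast_val, ZMod.cast_id, sub_self]
  rw [PadicInt.ker_toZModPow, Ideal.mem_span_singleton] at hker
  obtain ⟨m, hm⟩ := hker
  have hm' : x = (n : ℤ_[3]) + 27 * m := by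
    have : ((3:ℕ) : ℤ_[3]) ^ 3 = 27 := by norm_num
    rw [this] at hm
    linear_combination hm
  rcases Nat.eq_zero_or_pos n with h0 | h1
  · -- n = 0 : x = 27m, y = x + 1
    obtain ⟨z, hz⟩ := ninth_pow_of (x + 1) m (by rw [hm', h0]; norm_num; ring)
    obtain ⟨f, hf⟩ := rep13 (x + 1) (-1) (by norm_num) 1 (by norm_num) z hz
    exact ⟨f, by rw [← hf]; ring⟩
  · by_cases h13 : n ≤ 13
    · -- y = x - (n-1)
      obtain ⟨z, hz⟩ := ninth_pow_of (x - ((n - 1 : ℕ) : ℤ_[3])) m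
        (by rw [hm', Nat.cast_sub h1]; push_cast; ring)
      obtain ⟨f, hf⟩ := rep13 _ 1 (one_pow 9) (n - 1) (by omega) z hz
      refine ⟨f, ?_⟩
      rw [← hf, nsmul_eq_mul, mul_one]
      ring
    · -- 14 ≤ n ≤ 26 : y = x + (26 - n)
      obtain ⟨z, hz⟩ := ninth_pow_of' (x + ((26 - n : ℕ) : ℤ_[3])) (m + 1)
        (by rw [hm', Nat.cast_sub (by omega : n ≤ 26)]
            push_cast
            ring)
      obtain ⟨f, hf⟩ := rep13 _ (-1) (by norm_num) (26 - n) (by omega) z hz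
      refine ⟨f, ?_⟩
      rw [← hf, nsmul_eq_mul, mul_neg_one, Nat.cast_sub (by omega : n ≤ 26)]
      push_cast
      ring

lemma not12 : ¬ ∃ f : Fin 12 → ℤ_[3], (13 : ℤ_[3]) = ∑ i, f i ^ 9 := by
  rintro ⟨f, hf⟩
  have key : ∀ a : ZMod (3 ^ 3), a ^ 9 = 0 ∨ a ^ 9 = 1 ∨ a ^ 9 = -1 := by decide
  have hcast := congrArg (PadicInt.toZModPow (p := 3) 3) hf
  simp only [map_sum, map_pow, map_ofNat] at hcast
  have hchoice : ∀ i : Fin 12, ∃ k : ℤ, |k| ≤ 1 ∧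
      ((k : ZMod (3 ^ 3)) = (PadicInt.toZModPow 3 (f i)) ^ 9) := by
    intro i
    rcases key (PadicInt.toZModPow 3 (f i)) with h | h | h
    · exact ⟨0, by norm_num, by simp [h.symm]⟩
    · exact ⟨1, by norm_num, by simp [h.symm]⟩
    · exact ⟨-1, by norm_num, by rw [h]; push_cast; ring⟩
  choose g hg1 hg2 using hchoice
  have hsum : ((13 : ℤ) : ZMod (3 ^ 3)) = ((∑ i, g i : ℤ) : ZMod (3 ^ 3)) := by
    push_cast
    rw [Finset.sum_congr rfl (fun i _ => hg2 i), ← hcast]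
  rw [ZMod.intCast_eq_intCast_iff'] at hsum
  have habs : |∑ i, g i| ≤ 12 := by
    calc |∑ i, g i| ≤ ∑ i, |g i| := Finset.abs_sum_le_sum_abs _ _
      _ ≤ ∑ _i : Fin 12, (1 : ℤ) := Finset.sum_le_sum (fun i _ => hg1 i)
      _ = 12 := by simp
  rw [abs_le] at habs
  norm_num at hsum
  omega

lemma pad12 (G : ℕ) (hG : G ≤ 12) (f : Fin G → ℤ_[3]) :
    ∃ f' : Fin 12 → ℤ_[3], ∑ i, f' i ^ 9 = ∑ i, f i ^ 9 := by
  classical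
  refine ⟨fun i => if h : (i : ℕ) < G then f ⟨(i : ℕ), h⟩ else 0, ?_⟩
  have hpowfun : ∀ i : Fin 12,
      ((if h : (i : ℕ) < G then f ⟨(i : ℕ), h⟩ else 0) ^ 9 : ℤ_[3])
        = if h : (i : ℕ) < G then f ⟨(i : ℕ), h⟩ ^ 9 else 0 := by
    intro i
    by_cases h : (i : ℕ) < G <;> simp [h]
  rw [Finset.sum_congr rfl (fun i _ => hpowfun i)]
  rw [Fin.sum_univ_eq_sum_range (fun i => if h : i < G then f ⟨i, h⟩ ^ 9 else 0) 12]
  rw [← Finset.sum_subset (Finset.range_subset_range.2 hG)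
    (fun x _ hx => by simp [Finset.mem_range] at hx; simp [Nat.not_lt_of_ge hx])]
  rw [Finset.sum_range (fun i => if h : i < G then f ⟨i, h⟩ ^ 9 else 0)]
  exact Finset.sum_congr rfl (fun i _ => by rw [dif_pos i.isLt])

/-- `13` is not a sum of fewer than 13 ninth powers in `ℤ_[3]`, every element of `ℤ_[3]` is a
sum of at most 13 ninth powers, and hence `g_{ℤ_3}(9) = 13`. -/
theorem gZ3_nine :
    (¬ ∃ f : Fin 12 → ℤ_[3], (13 : ℤ_[3]) = ∑ i, f i ^ 9) ∧
    (∀ x : ℤ_[3], ∃ f : Fin 13 → ℤ_[3], x = ∑ i, f i ^ 9) ∧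
    waringNumber ℤ_[3] 9 = 13 := by
  refine ⟨not12, exists_rep, ?_⟩
  have h13 : 13 ∈ {g | 0 < g ∧ ∀ x ∈ AddSubsemigroup.closure {y : ℤ_[3] | ∃ z : ℤ_[3], z ^ 9 = y},
      ∃ f : Fin g → ℤ_[3], x = ∑ i, f i ^ 9} :=
    ⟨by norm_num, fun x _ => exists_rep x⟩
  have hone : (1 : ℤ_[3]) ∈ {y : ℤ_[3] | ∃ z : ℤ_[3], z ^ 9 = y} := ⟨1, one_pow 9⟩
  have hcl : ∀ k : ℕ, ((k + 1 : ℕ) : ℤ_[3]) ∈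
      AddSubsemigroup.closure {y : ℤ_[3] | ∃ z : ℤ_[3], z ^ 9 = y} := by
    intro k
    induction k with
    | zero => simpa using AddSubsemigroup.subset_closure hone
    | succ k ih =>
        have := AddSubsemigroup.add_mem _ ih (AddSubsemigroup.subset_closure hone)
        convert this using 1
        push_cast
        ring
  have h13cl : (13 : ℤ_[3]) ∈ AddSubsemigroup.closure {y : ℤ_[3] | ∃ z : ℤ_[3], z ^ 9 = y} := by
    have := hcl 12
    norm_num at this
    exact this
  unfold waringNumber
  refine le_antisymm (Nat.sInf_le h13) ?_
  obtain ⟨hpos, hall⟩ := Nat.sInf_mem (⟨13, h13⟩ : Set.Nonempty _)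
  by_contra hlt
  push_neg at hlt
  obtain ⟨f, hf⟩ := hall 13 h13cl
  have hle : sInf {g | 0 < g ∧ ∀ x ∈ AddSubsemigroup.closure {y : ℤ_[3] | ∃ z : ℤ_[3], z ^ 9 = y},
      ∃ f : Fin g → ℤ_[3], x = ∑ i, f i ^ 9} ≤ 12 := Nat.lt_succ_iff.mp hlt
  obtain ⟨f', hf'⟩ := pad12 _ hle f
  exact not12 ⟨f', hf.trans hf'.symm⟩
end

section
/- Let k ≡ 2 mod 4 with k ≥ 6 and let ω = √2. Every element of the additive semigroup generated by k-th powers in Z_2[√2] can be written as a sum of at most 6 k-th powers, and (√2)^3 requires exactly 6; hence g_{Z_2[√2]}(k) = 6. -/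
open Polynomial

/-- The ring `ℤ_2[√2]`, realized as `ℤ_[2][X]/(X² - 2)`. -/
noncomputable abbrev Z2Sqrt2 : Type := AdjoinRoot ((X : ℤ_[2][X]) ^ 2 - C 2)

/-- `√2` in `ℤ_2[√2]`. -/
noncomputable def sqrt2 : Z2Sqrt2 := AdjoinRoot.root _

noncomputable def j2 : ℤ_[2] →+* Z2Sqrt2 := algebraMap _ _

lemma gmonic : ((X : ℤ_[2][X]) ^ 2 - C 2).Monic := monic_X_pow_sub_C _ (by norm_num)

lemma sq2 : sqrt2 ^ 2 = 2 := by
  have h := AdjoinRoot.mk_self (f := (X : ℤ_[2][X]) ^ 2 - C 2)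
  simp only [map_sub, map_pow, AdjoinRoot.mk_X, AdjoinRoot.mk_C] at h
  have : (AdjoinRoot.root ((X : ℤ_[2][X]) ^ 2 - C 2)) ^ 2 - 2 = 0 := by
    rw [show (AdjoinRoot.of ((X : ℤ_[2][X]) ^ 2 - C 2)) (2 : ℤ_[2]) = 2 from map_ofNat _ 2] at h
    exact h
  rw [sqrt2]; exact sub_eq_zero.mp this

lemma gdeg : ((X : ℤ_[2][X]) ^ 2 - C 2).degree = 2 := by
  have h2 : ((X : ℤ_[2][X]) ^ 2 - C 2).natDegree = 2 := by
    simpa using natDegree_X_pow_sub_C (n := 2) (a := (2 : ℤ_[2]))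
  rw [degree_eq_natDegree gmonic.ne_zero, h2]; rfl

lemma decomp (x : Z2Sqrt2) : ∃ a b : ℤ_[2], x = j2 a + j2 b * sqrt2 := by
  induction x using AdjoinRoot.induction_on with
  | ih p =>
    have hmk : AdjoinRoot.mk _ p = AdjoinRoot.mk ((X : ℤ_[2][X]) ^ 2 - C 2)
        (p %ₘ ((X : ℤ_[2][X]) ^ 2 - C 2)) := by
      rw [AdjoinRoot.mk_eq_mk]
      exact ⟨p /ₘ ((X : ℤ_[2][X]) ^ 2 - C 2), by rw [modByMonic_eq_sub_mul_div p ((X : ℤ_[2][X]) ^ 2 - C 2)]; ring⟩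
    have hdeg : (p %ₘ ((X : ℤ_[2][X]) ^ 2 - C 2)).degree ≤ 1 := by
      have := degree_modByMonic_lt p gmonic
      rw [gdeg] at this
      exact Order.le_of_lt_succ (by exact_mod_cast this)
    refine ⟨(p %ₘ ((X : ℤ_[2][X]) ^ 2 - C 2)).coeff 0,
      (p %ₘ ((X : ℤ_[2][X]) ^ 2 - C 2)).coeff 1, ?_⟩
    rw [hmk]
    conv_lhs => rw [eq_X_add_C_of_degree_le_one hdeg]
    rw [map_add, map_mul, AdjoinRoot.mk_X, AdjoinRoot.mk_C, AdjoinRoot.mk_C]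
    rw [j2, AdjoinRoot.algebraMap_eq, sqrt2]
    ring

lemma uniq {a b : ℤ_[2]} (h : j2 a + j2 b * sqrt2 = 0) : a = 0 ∧ b = 0 := by
  have hmk : AdjoinRoot.mk ((X : ℤ_[2][X]) ^ 2 - C 2) (C b * X + C a) = 0 := by
    rw [map_add, map_mul, AdjoinRoot.mk_X, AdjoinRoot.mk_C, AdjoinRoot.mk_C]
    rw [j2, AdjoinRoot.algebraMap_eq, sqrt2] at h
    rw [← h]; ring
  rw [AdjoinRoot.mk_eq_zero] at hmk
  have hz : C b * X + C a = 0 := by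
    by_contra hne
    have := Polynomial.degree_le_of_dvd hmk hne
    rw [gdeg] at this
    have hle : (C b * X + C a).degree ≤ 1 := Polynomial.degree_linear_le
    have : (2 : WithBot ℕ) ≤ 1 := le_trans this hle
    norm_num at this
  constructor
  · have := congrArg (fun q => Polynomial.coeff q 0) hz
    simpa using this
  · have := congrArg (fun q => Polynomial.coeff q 1) hz
    simpa using this

lemma padic_zero {a : ℤ_[2]} (h : ∀ n : ℕ, (2:ℤ_[2])^n ∣ a) : a = 0 := by
  by_contra hne
  have hpos : 0 < ‖a‖ := by simpa [norm_pos_iff] using hne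
  obtain ⟨n, hn⟩ := PadicInt.exists_pow_neg_lt 2 hpos
  have : ‖a‖ ≤ (2:ℝ)^(-(n:ℤ)) := by
    rw [show ((2:ℝ)) = ((2:ℕ):ℝ) by norm_num, PadicInt.norm_le_pow_iff_mem_span_pow]
    exact Ideal.mem_span_singleton.mpr (by exact_mod_cast h n)
  linarith [lt_of_le_of_lt this (by exact_mod_cast hn)]

lemma padic_limit (a : ℕ → ℤ_[2]) (h : ∀ n, (2:ℤ_[2])^n ∣ a (n+1) - a n) :
    ∃ A, ∀ n, (2:ℤ_[2])^n ∣ A - a n := by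
  have tel : ∀ m q, (2:ℤ_[2])^m ∣ a (m+q) - a m := by
    intro m q
    induction q with
    | zero => simp
    | succ q ih =>
      have h2 : (2:ℤ_[2])^m ∣ a (m+q+1) - a (m+q) :=
        dvd_trans (pow_dvd_pow 2 (Nat.le_add_right m q)) (h (m+q))
      have := dvd_add h2 ih
      simpa [← add_assoc] using this
  have hc : ∀ {m n}, m ≤ n →
      a m ≡ a n [SMOD ((IsLocalRing.maximalIdeal ℤ_[2])^m • ⊤ : Ideal ℤ_[2])] := by
    intro m n hmn
    rw [SModEq.sub_mem]
    simp only [← Ideal.one_eq_top, smul_eq_mul, mul_one, PadicInt.maximalIdeal_eq_span_p,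
      Ideal.span_singleton_pow, Ideal.mem_span_singleton]
    obtain ⟨q, rfl⟩ := Nat.exists_eq_add_of_le hmn
    simpa [neg_sub] using (tel m q).neg_right
  obtain ⟨A, hA⟩ := IsPrecomplete.prec (IsAdicComplete.toIsPrecomplete) hc
  refine ⟨A, fun n => ?_⟩
  have := hA n
  rw [SModEq.sub_mem] at this
  simp only [← Ideal.one_eq_top, smul_eq_mul, mul_one, PadicInt.maximalIdeal_eq_span_p,
    Ideal.span_singleton_pow, Ideal.mem_span_singleton] at this
  simpa [neg_sub] using this.neg_right

lemma uniq2 {a b c d : ℤ_[2]} (h : j2 a + j2 b * sqrt2 = j2 c + j2 d * sqrt2) :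
    a = c ∧ b = d := by
  have h0 : j2 (a - c) + j2 (b - d) * sqrt2 = 0 := by
    rw [map_sub, map_sub]; rw [← sub_eq_zero] at h; rw [← h]; ring
  obtain ⟨h1, h2⟩ := uniq h0
  exact ⟨sub_eq_zero.mp h1, sub_eq_zero.mp h2⟩

lemma two_pow (n : ℕ) : sqrt2 ^ (2*n) = j2 ((2:ℤ_[2])^n) := by
  rw [pow_mul, sq2, map_pow]
  exact congrArg (· ^ n) (map_ofNat j2 2).symm

lemma dvd_coords {n : ℕ} {a b : ℤ_[2]} (h : sqrt2 ^ (2*n) ∣ j2 a + j2 b * sqrt2) :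
    (2:ℤ_[2])^n ∣ a ∧ (2:ℤ_[2])^n ∣ b := by
  obtain ⟨y, hy⟩ := h
  obtain ⟨c, d, rfl⟩ := decomp y
  rw [two_pow] at hy
  have : j2 a + j2 b * sqrt2 = j2 (2^n*c) + j2 (2^n*d) * sqrt2 := by
    rw [hy, map_mul, map_mul]; ring
  obtain ⟨h1, h2⟩ := uniq2 this
  exact ⟨⟨c, h1⟩, ⟨d, h2⟩⟩

lemma sep {x : Z2Sqrt2} (h : ∀ n : ℕ, sqrt2 ^ n ∣ x) : x = 0 := by
  obtain ⟨a, b, rfl⟩ := decomp x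
  have h2 : ∀ n : ℕ, (2:ℤ_[2])^n ∣ a ∧ (2:ℤ_[2])^n ∣ b := fun n => dvd_coords (h (2*n))
  rw [padic_zero (fun n => (h2 n).1), padic_zero (fun n => (h2 n).2)]
  simp

lemma telR (z : ℕ → Z2Sqrt2) (h : ∀ n, sqrt2 ^ n ∣ z (n+1) - z n) :
    ∀ m q, sqrt2 ^ m ∣ z (m+q) - z m := by
  intro m q
  induction q with
  | zero => simp
  | succ q ih =>
    have h2 : sqrt2^m ∣ z (m+q+1) - z (m+q) :=
      dvd_trans (pow_dvd_pow sqrt2 (Nat.le_add_right m q)) (h (m+q))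
    have := dvd_add h2 ih
    simpa [← add_assoc] using this

lemma cauchyR (z : ℕ → Z2Sqrt2) (h : ∀ n, sqrt2 ^ n ∣ z (n+1) - z n) :
    ∃ L, ∀ n, sqrt2 ^ n ∣ L - z n := by
  choose a b hab using fun n => decomp (z n)
  have hd : ∀ n, (2:ℤ_[2])^n ∣ a (2*(n+1)) - a (2*n) ∧ (2:ℤ_[2])^n ∣ b (2*(n+1)) - b (2*n) := by
    intro n
    apply dvd_coords
    have heq : j2 (a (2*(n+1)) - a (2*n)) + j2 (b (2*(n+1)) - b (2*n)) * sqrt2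
        = z (2*(n+1)) - z (2*n) := by
      rw [map_sub, map_sub, hab, hab]; ring
    rw [heq]
    have := telR z h (2*n) 2
    simpa [show 2*n+2 = 2*(n+1) by ring] using this
  obtain ⟨A, hA⟩ := padic_limit (fun n => a (2*n)) (fun n => (hd n).1)
  obtain ⟨B, hB⟩ := padic_limit (fun n => b (2*n)) (fun n => (hd n).2)
  refine ⟨j2 A + j2 B * sqrt2, fun n => ?_⟩
  have key : sqrt2 ^ (2*n) ∣ (j2 A + j2 B * sqrt2) - z (2*n) := by
    obtain ⟨c, hc⟩ := hA n
    obtain ⟨d, hd'⟩ := hB n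
    refine ⟨j2 c + j2 d * sqrt2, ?_⟩
    rw [hab (2*n), two_pow]
    have hc' : A = 2^n * c + a (2*n) := by rw [← hc]; ring
    have hd'' : B = 2^n * d + b (2*n) := by rw [← hd']; ring
    rw [hc', hd'', map_add, map_add, map_mul, map_mul]
    ring
  have h2 : sqrt2 ^ n ∣ z (2*n) - z n := by
    have := telR z h n n
    simpa [show n+n = 2*n by ring] using this
  have := dvd_add (dvd_trans (pow_dvd_pow sqrt2 (by omega : n ≤ 2*n)) key) h2
  simpa using this

lemma fixpoint (μ : Z2Sqrt2) (hμ : IsUnit μ) (Q : Polynomial Z2Sqrt2) (t : Z2Sqrt2) :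
    ∃ s, μ * s + sqrt2 * Q.eval s = t := by
  obtain ⟨v, hv⟩ := hμ
  set w : Z2Sqrt2 := ↑v⁻¹ with hw
  have hvw : μ * w = 1 := by rw [hw, ← hv]; exact_mod_cast v.mul_inv
  let z : ℕ → Z2Sqrt2 := fun n => Nat.rec 0 (fun _ s => w * (t - sqrt2 * Q.eval s)) n
  have hz : ∀ n, z (n+1) = w * (t - sqrt2 * Q.eval (z n)) := fun n => rfl
  have hdiff : ∀ n, sqrt2 ^ n ∣ z (n+1) - z n := by
    intro n
    induction n with
    | zero => simp
    | succ n ih =>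
      have key : z (n+2) - z (n+1) = w * sqrt2 * (Q.eval (z n) - Q.eval (z (n+1))) := by
        have e1 := hz (n+1)
        have e2 := hz n
        linear_combination e1 - e2
      obtain ⟨c, hc⟩ := sub_dvd_eval_sub (z n) (z (n+1)) Q
      obtain ⟨d, hd⟩ := ih
      refine ⟨w * (-(d * c)), ?_⟩
      rw [key, hc]
      have h3 : z n - z (n+1) = -(sqrt2 ^ n * d) := by rw [← hd]; ring
      rw [h3]
      ring
  obtain ⟨L, hL⟩ := cauchyR z hdiff
  refine ⟨L, ?_⟩
  apply sub_eq_zero.mp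
  apply sep
  intro n
  obtain ⟨c, hc⟩ := hL (n+1)
  obtain ⟨d, hd⟩ := sub_dvd_eval_sub L (z n) Q
  obtain ⟨e, he⟩ := hL n
  have expand : μ * L + sqrt2 * Q.eval L - t
      = μ * (L - z (n+1)) + sqrt2 * (Q.eval L - Q.eval (z n))
        + (μ * z (n+1) + sqrt2 * Q.eval (z n) - t) := by ring
  have hlast : μ * z (n+1) + sqrt2 * Q.eval (z n) - t = 0 := by
    rw [hz, ← mul_assoc, hvw]; ring
  refine ⟨μ * sqrt2 * c + sqrt2 * e * d, ?_⟩
  rw [expand, hlast, hc, hd, he]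
  ring

lemma binom (m : ℕ) : ∃ P : Polynomial Z2Sqrt2,
    ∀ x : Z2Sqrt2, (1+x)^m = 1 + m*x + x^2 * P.eval x := by
  induction m with
  | zero => exact ⟨0, by simp⟩
  | succ m ih =>
    obtain ⟨P, hP⟩ := ih
    refine ⟨P + C (m : Z2Sqrt2) + X * P, fun x => ?_⟩
    have h := hP x
    simp only [eval_add, eval_mul, eval_C, eval_X]
    push_cast
    linear_combination (1 + x) * h

lemma odd_unit {m : ℕ} (hm : Odd m) : IsUnit ((m : Z2Sqrt2)) := by
  have h2 : IsUnit ((m : ℤ_[2])) := by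
    by_contra h
    have hmem : (m : ℤ_[2]) ∈ IsLocalRing.maximalIdeal ℤ_[2] :=
      (IsLocalRing.mem_maximalIdeal _).mpr (mem_nonunits_iff.mpr h)
    rw [PadicInt.maximalIdeal_eq_span_p, Ideal.mem_span_singleton] at hmem
    have hdvd : ((2:ℕ):ℤ_[2])^1 ∣ ((m:ℤ):ℤ_[2]) := by push_cast; simpa using hmem
    rw [PadicInt.pow_p_dvd_int_iff] at hdvd
    obtain ⟨r, hr⟩ := hm
    norm_num at hdvd
    omega
  have hj : ((m : Z2Sqrt2)) = j2 ((m : ℤ_[2])) := (map_natCast j2 m).symm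
  rw [hj]; exact h2.map j2

lemma pow5 : sqrt2^5 = 4*sqrt2 := by linear_combination (sqrt2^3 + 2*sqrt2)*sq2

lemma sqrtStep (L : Z2Sqrt2) : ∃ z, z^2 = 1 + 4*sqrt2*L := by
  obtain ⟨s, hs⟩ := fixpoint 1 isUnit_one (X^2) L
  simp only [eval_pow, eval_X, one_mul] at hs
  exact ⟨1 + 2*sqrt2*s, by linear_combination 4*sqrt2*hs⟩

lemma mroot (m : ℕ) (hm : Odd m) (t : Z2Sqrt2) :
    ∃ L, (1 + 4*sqrt2*L)^m = 1 + 4*sqrt2*t := by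
  obtain ⟨P, hP⟩ := binom m
  obtain ⟨s, hs⟩ := fixpoint (m : Z2Sqrt2) (odd_unit hm)
    (C 4 * X^2 * P.comp (C 4 * C sqrt2 * X)) t
  refine ⟨s, ?_⟩
  have h := hP (4*sqrt2*s)
  simp only [eval_mul, eval_pow, eval_C, eval_X, eval_comp] at hs
  linear_combination h + 4*sqrt2*hs

lemma hensel1 {k m : ℕ} (hk : k = 2*m) (hm : Odd m) {u : Z2Sqrt2}
    (h : sqrt2^5 ∣ u - 1) : ∃ z, z^k = u := by
  obtain ⟨t, ht⟩ := h
  have hu : u = 1 + 4*sqrt2*t := by rw [← pow5]; linear_combination ht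
  obtain ⟨L, hL⟩ := mroot m hm t
  obtain ⟨z, hz⟩ := sqrtStep L
  exact ⟨z, by rw [hk, pow_mul, hz, hL, ← hu]⟩

lemma sq1p : (1+sqrt2)^2 = 3 + 2*sqrt2 := by linear_combination sq2

lemma cong1 {k m : ℕ} (hk : k = 2*m) (hm : Odd m) :
    sqrt2^5 ∣ (1+sqrt2)^k - (3+2*sqrt2) := by
  obtain ⟨l, hl⟩ := hm
  have h2 : (3+2*sqrt2)^2 = 1 + sqrt2^5*(3+2*sqrt2) := by
    rw [pow5]; linear_combination (-4)*sq2
  obtain ⟨c, hc⟩ := sub_dvd_pow_sub_pow ((3+2*sqrt2)^2) 1 l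
  have hkey : (1+sqrt2)^k = ((3+2*sqrt2)^2)^l * (3+2*sqrt2) := by
    rw [hk, pow_mul, sq1p, hl, pow_add, pow_mul, pow_one]
  refine ⟨(3+2*sqrt2)^2*c, ?_⟩
  rw [hkey]
  linear_combination (3+2*sqrt2)*hc + (3+2*sqrt2)*c*h2

lemma hensel3 {k m : ℕ} (hk : k = 2*m) (hm : Odd m) {u : Z2Sqrt2}
    (h : sqrt2^5 ∣ u - (3+2*sqrt2)) : ∃ z, z^k = u := by
  have hinv : (1+sqrt2)*(sqrt2-1) = 1 := by linear_combination sq2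
  have hinvk : (1+sqrt2)^k*(sqrt2-1)^k = 1 := by rw [← mul_pow, hinv, one_pow]
  obtain ⟨c0, hc0⟩ := dvd_sub h (cong1 hk hm)
  have hc : u - (1+sqrt2)^k = sqrt2^5 * c0 := by linear_combination hc0
  have key : sqrt2^5 ∣ (sqrt2-1)^k * u - 1 :=
    ⟨(sqrt2-1)^k * c0, by linear_combination (sqrt2-1)^k*hc + hinvk⟩
  obtain ⟨z', hz'⟩ := hensel1 hk hm key
  exact ⟨(1+sqrt2)*z', by rw [mul_pow, hz']; linear_combination u*hinvk⟩

lemma parity (c : ℤ_[2]) : (∃ e, c = 2*e) ∨ (∃ e, c = 2*e+1) := by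
  have h := PadicInt.appr_spec 1 c
  rw [Ideal.mem_span_singleton] at h
  have hlt := PadicInt.appr_lt c 1
  norm_num at hlt
  obtain ⟨e, he⟩ := h
  interval_cases ht : (c.appr 1)
  · left; refine ⟨e, ?_⟩
    push_cast at he; linear_combination he
  · right; refine ⟨e, ?_⟩
    push_cast at he; linear_combination he

lemma even_sq (c : ℤ_[2]) : ∃ e, c^2 + c = 2*e := by
  rcases parity c with ⟨e, rfl⟩ | ⟨e, rfl⟩
  · exact ⟨2*e^2 + e, by ring⟩
  · exact ⟨2*e^2 + 3*e + 1, by ring⟩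

lemma odd_sq8 {a : ℤ_[2]} (c : ℤ_[2]) (hc : a = 2*c+1) : ∃ e, a^2 - 1 = 8*e := by
  obtain ⟨e, he⟩ := even_sq c
  exact ⟨e, by rw [hc]; linear_combination 4*he⟩

lemma sq_decomp (a b : ℤ_[2]) :
    (j2 a + j2 b*sqrt2)^2 = j2 (a^2+2*b^2) + j2 (2*(a*b))*sqrt2 := by
  simp only [map_add, map_mul, map_pow, map_ofNat]
  linear_combination (j2 b)^2*sq2

lemma div85 (c d : Z2Sqrt2) : sqrt2^5 ∣ 8*c + 4*sqrt2*d :=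
  ⟨sqrt2*c + d, by rw [pow5]; linear_combination (-4)*c*sq2⟩

lemma cong3 {m : ℕ} (hm : Odd m) : sqrt2^5 ∣ (3+2*sqrt2)^m - (3+2*sqrt2) := by
  obtain ⟨l, hl⟩ := hm
  have h2 : (3+2*sqrt2)^2 = 1 + sqrt2^5*(3+2*sqrt2) := by
    rw [pow5]; linear_combination (-4)*sq2
  obtain ⟨c, hc⟩ := sub_dvd_pow_sub_pow ((3+2*sqrt2)^2) 1 l
  have hkey : (3+2*sqrt2)^m = ((3+2*sqrt2)^2)^l * (3+2*sqrt2) := by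
    rw [hl, pow_add, pow_mul, pow_one]
  refine ⟨(3+2*sqrt2)^2*c, ?_⟩
  rw [hkey]
  linear_combination (3+2*sqrt2)*hc + (3+2*sqrt2)*c*h2

lemma pow_class {k m : ℕ} (hk : k = 2*m) (hm : Odd m) (hk6 : 6 ≤ k) (z : Z2Sqrt2) :
    sqrt2^5 ∣ z^k ∨ sqrt2^5 ∣ z^k - 1 ∨ sqrt2^5 ∣ z^k - (3+2*sqrt2) := by
  obtain ⟨a, b, rfl⟩ := decomp z
  rcases parity a with ⟨c, rfl⟩ | ⟨c, hc⟩
  · left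
    have hz : j2 (2*c) + j2 b * sqrt2 = sqrt2 * (j2 b + j2 c * sqrt2) := by
      simp only [map_mul, map_ofNat]
      linear_combination (-(j2 c)) * sq2
    rw [hz, mul_pow]
    exact Dvd.dvd.mul_right (pow_dvd_pow sqrt2 (by omega : 5 ≤ k)) _
  · have heR : ∀ e : ℤ_[2], a^2 - 1 = 8*e → (j2 a)^2 - 1 = 8 * j2 e := by
      intro e he
      have h := congrArg j2 he
      simp only [map_sub, map_mul, map_pow, map_ofNat, map_one] at h
      linear_combination h
    obtain ⟨e, he⟩ := odd_sq8 c hc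
    have heR' := heR e he
    rcases parity b with ⟨d, rfl⟩ | ⟨d, hd⟩
    · right; left
      have h1 : sqrt2^5 ∣ (j2 a + j2 (2*d)*sqrt2)^2 - 1 := by
        have heq : (j2 a + j2 (2*d)*sqrt2)^2 - 1
            = 8*(j2 e + (j2 d)^2) + 4*sqrt2*(j2 a * j2 d) := by
          rw [sq_decomp]
          simp only [map_add, map_mul, map_pow, map_ofNat]
          linear_combination heR'
        rw [heq]
        exact div85 _ _
      rw [hk, pow_mul]
      have h2 := h1.trans (sub_dvd_pow_sub_pow ((j2 a + j2 (2*d)*sqrt2)^2) 1 m)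
      simpa using h2
    · right; right
      have ha' : j2 a = 2 * j2 c + 1 := by
        have := congrArg j2 hc
        simpa only [map_add, map_mul, map_ofNat, map_one] using this
      have hb' : j2 b = 2 * j2 d + 1 := by
        have := congrArg j2 hd
        simpa only [map_add, map_mul, map_ofNat, map_one] using this
      have h1 : sqrt2^5 ∣ (j2 a + j2 b*sqrt2)^2 - (3+2*sqrt2) := by
        have heq : (j2 a + j2 b*sqrt2)^2 - (3+2*sqrt2)
            = 8*(j2 e + (j2 d)^2 + j2 d)
              + 4*sqrt2*(2*(j2 c * j2 d) + j2 c + j2 d) := by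
          rw [sq_decomp]
          simp only [map_add, map_mul, map_pow, map_ofNat]
          linear_combination heR' + (2*(j2 b) + 4*(j2 d) + 2)*hb'
            + sqrt2*(2*(j2 b)*ha' + (4*(j2 c)+2)*hb')
        rw [heq]
        exact div85 _ _
      rw [hk, pow_mul]
      have h2 := dvd_add (h1.trans (sub_dvd_pow_sub_pow _ _ m)) (cong3 hm)
      have h3 : ((j2 a + j2 b*sqrt2)^2)^m - (3+2*sqrt2)^m + ((3+2*sqrt2)^m - (3+2*sqrt2))
          = ((j2 a + j2 b*sqrt2)^2)^m - (3+2*sqrt2) := by ring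
      rwa [h3] at h2

lemma sum_class {k m : ℕ} (hk : k = 2*m) (hm : Odd m) (hk6 : 6 ≤ k) :
    ∀ (n : ℕ) (f : Fin n → Z2Sqrt2), ∃ p q : ℕ, p + q ≤ n ∧
      sqrt2^5 ∣ (∑ i, f i ^ k) - ((p:Z2Sqrt2) + (q:Z2Sqrt2)*(3+2*sqrt2)) := by
  intro n
  induction n with
  | zero => exact fun f => ⟨0, 0, by omega, by simp⟩
  | succ n ih =>
    intro f
    obtain ⟨p, q, hpq, hd⟩ := ih (f ∘ Fin.succ)
    have hsum : ∑ i, f i ^ k = f 0 ^ k + ∑ i : Fin n, (f ∘ Fin.succ) i ^ k := by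
      rw [Fin.sum_univ_succ]; rfl
    obtain ⟨c2, hc2⟩ := hd
    rcases pow_class hk hm hk6 (f 0) with h0 | h0 | h0
    · obtain ⟨c1, hc1⟩ := h0
      exact ⟨p, q, by omega, ⟨c1+c2, by rw [hsum]; push_cast; linear_combination hc1 + hc2⟩⟩
    · obtain ⟨c1, hc1⟩ := h0
      exact ⟨p+1, q, by omega, ⟨c1+c2, by rw [hsum]; push_cast; linear_combination hc1 + hc2⟩⟩
    · obtain ⟨c1, hc1⟩ := h0
      exact ⟨p, q+1, by omega, ⟨c1+c2, by rw [hsum]; push_cast; linear_combination hc1 + hc2⟩⟩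

lemma lower {k m : ℕ} (hk : k = 2*m) (hm : Odd m) (hk6 : 6 ≤ k)
    (n : ℕ) (hn : n ≤ 5) (f : Fin n → Z2Sqrt2) : sqrt2 ^ 3 ≠ ∑ i, f i ^ k := by
  intro heq
  obtain ⟨p, q, hpq, hd⟩ := sum_class hk hm hk6 n f
  rw [← heq] at hd
  obtain ⟨w, hw⟩ := hd
  obtain ⟨c, d, rfl⟩ := decomp w
  have hw' : 2*sqrt2 - ((p:Z2Sqrt2) + (q:Z2Sqrt2)*(3+2*sqrt2)) = 8*(j2 d) + 4*sqrt2*(j2 c) := by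
    linear_combination hw + (-sqrt2 + sqrt2*(j2 c)*(sqrt2^2+2)
      + (j2 d)*(sqrt2^4+2*sqrt2^2+4))*sq2
  have h0 : j2 ((-(p:ℤ_[2]) - 3*q) - 8*d) + j2 ((2 - 2*q) - 4*c) * sqrt2 = 0 := by
    simp only [map_sub, map_neg, map_mul, map_natCast, map_ofNat]
    linear_combination hw'
  obtain ⟨h1, h2⟩ := uniq h0
  have hA : ((2:ℕ):ℤ_[2])^3 ∣ (((p:ℤ) + 3*(q:ℤ) : ℤ):ℤ_[2]) := by
    refine ⟨-d, ?_⟩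
    push_cast
    push_cast at h1
    linear_combination (-1) * h1
  have hB : ((2:ℕ):ℤ_[2])^2 ∣ (((2:ℤ) - 2*(q:ℤ) : ℤ):ℤ_[2]) := by
    refine ⟨c, ?_⟩
    push_cast
    push_cast at h2
    linear_combination h2
  rw [PadicInt.pow_p_dvd_int_iff] at hA hB
  norm_num at hA hB
  omega

def Sform (x : Z2Sqrt2) : Prop := ∃ a b : ℤ_[2], x = j2 a + 2*(j2 b)*sqrt2

lemma Sform_add {x y : Z2Sqrt2} (hx : Sform x) (hy : Sform y) : Sform (x + y) := by
  obtain ⟨a, b, rfl⟩ := hx; obtain ⟨c, d, rfl⟩ := hy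
  exact ⟨a+c, b+d, by simp only [map_add]; ring⟩

lemma Sform_mul {x y : Z2Sqrt2} (hx : Sform x) (hy : Sform y) : Sform (x * y) := by
  obtain ⟨a, b, rfl⟩ := hx; obtain ⟨c, d, rfl⟩ := hy
  refine ⟨a*c + 8*(b*d), a*d + b*c, ?_⟩
  simp only [map_add, map_mul, map_ofNat]
  linear_combination 4*(j2 b)*(j2 d)*sq2

lemma Sform_pow {x : Z2Sqrt2} (hx : Sform x) (n : ℕ) : Sform (x ^ n) := by
  induction n with
  | zero => exact ⟨1, 0, by simp⟩
  | succ n ih => rw [pow_succ]; exact Sform_mul ih hx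

lemma Sform_kpow {k m : ℕ} (hk : k = 2*m) (z : Z2Sqrt2) : Sform (z ^ k) := by
  obtain ⟨a, b, rfl⟩ := decomp z
  rw [hk, pow_mul]
  refine Sform_pow ⟨a^2 + 2*b^2, a*b, ?_⟩ m
  rw [sq_decomp]
  simp only [map_add, map_mul, map_pow, map_ofNat]

lemma closureS {k m : ℕ} (hk : k = 2*m) {x : Z2Sqrt2}
    (hx : x ∈ AddSubsemigroup.closure {y : Z2Sqrt2 | ∃ z : Z2Sqrt2, z ^ k = y}) :
    Sform x := by
  let S : AddSubsemigroup Z2Sqrt2 :=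
    { carrier := {x | Sform x}
      add_mem' := fun ha hb => Sform_add ha hb }
  have hsub : {y : Z2Sqrt2 | ∃ z : Z2Sqrt2, z ^ k = y} ⊆ S := by
    rintro y ⟨z, rfl⟩
    exact Sform_kpow hk z
  exact AddSubsemigroup.closure_le.mpr hsub hx

lemma shift_res {x u : Z2Sqrt2} (h : sqrt2^5 ∣ x - u) (v c0 d0 : Z2Sqrt2)
    (hv : u - v = 8*c0 + 4*sqrt2*d0) : sqrt2^5 ∣ x - v := by
  obtain ⟨w1, hw1⟩ := h
  obtain ⟨w2, hw2⟩ := div85 c0 d0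
  exact ⟨w1 + w2, by linear_combination hw1 + hw2 + hv⟩

lemma repAux {k m : ℕ} (hk : k = 2*m) (hm : Odd m) (i q : ℕ) (x : Z2Sqrt2)
    (h : sqrt2^5 ∣ x - ((i:Z2Sqrt2)*(3+2*sqrt2) + (q:Z2Sqrt2) + 1)) :
    ∃ z : Z2Sqrt2, x = (i:Z2Sqrt2)*(1+sqrt2)^k + (q:Z2Sqrt2) + z^k := by
  obtain ⟨c1, hc1⟩ := cong1 hk hm
  obtain ⟨c0, hc0⟩ := h
  have hu : sqrt2^5 ∣ (x - (i:Z2Sqrt2)*(1+sqrt2)^k - (q:Z2Sqrt2)) - 1 :=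
    ⟨c0 - i*c1, by push_cast; linear_combination hc0 - (i:Z2Sqrt2)*hc1⟩
  obtain ⟨z, hz⟩ := hensel1 hk hm hu
  exact ⟨z, by linear_combination -hz⟩

lemma repAux3 {k m : ℕ} (hk : k = 2*m) (hm : Odd m) (x : Z2Sqrt2)
    (h : sqrt2^5 ∣ x - (9+6*sqrt2)) :
    ∃ z : Z2Sqrt2, x = 2*(1+sqrt2)^k + z^k := by
  obtain ⟨c1, hc1⟩ := cong1 hk hm
  obtain ⟨c0, hc0⟩ := h
  have hu : sqrt2^5 ∣ (x - 2*(1+sqrt2)^k) - (3+2*sqrt2) :=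
    ⟨c0 - 2*c1, by linear_combination hc0 - 2*hc1⟩
  obtain ⟨z, hz⟩ := hensel3 hk hm hu
  exact ⟨z, by linear_combination -hz⟩

lemma vec6_5 (x0 x1 x2 x3 x4 x5 : Z2Sqrt2) : ![x0,x1,x2,x3,x4,x5] 5 = x5 := rfl

lemma allS {k m : ℕ} (hk : k = 2*m) (hm : Odd m) (hk6 : 6 ≤ k) (a b : ℤ_[2]) :
    ∃ f : Fin 6 → Z2Sqrt2, j2 a + 2*(j2 b)*sqrt2 = ∑ i, f i ^ k := by
  have hk0 : k ≠ 0 := by omega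
  have hra := PadicInt.appr_spec 3 a
  rw [Ideal.mem_span_singleton] at hra
  obtain ⟨c, hc⟩ := hra
  have hrb := PadicInt.appr_spec 1 b
  rw [Ideal.mem_span_singleton] at hrb
  obtain ⟨d, hd⟩ := hrb
  have hlta : a.appr 3 < 8 := by have := PadicInt.appr_lt a 3; norm_num at this; exact this
  have hltb : b.appr 1 < 2 := by have := PadicInt.appr_lt b 1; norm_num at this; omega
  have hres : sqrt2^5 ∣ (j2 a + 2*(j2 b)*sqrt2)
      - (((a.appr 3 : ℕ):Z2Sqrt2) + 2*((b.appr 1 : ℕ):Z2Sqrt2)*sqrt2) := by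
    have hcj : j2 a - ((a.appr 3 : ℕ):Z2Sqrt2) = 8 * j2 c := by
      have := congrArg j2 hc
      simp only [map_sub, map_mul, map_pow, map_natCast, map_ofNat] at this
      push_cast at this ⊢
      linear_combination this
    have hdj : j2 b - ((b.appr 1 : ℕ):Z2Sqrt2) = 2 * j2 d := by
      have := congrArg j2 hd
      simp only [map_sub, map_mul, map_pow, map_natCast, map_ofNat] at this
      push_cast at this ⊢
      linear_combination this
    have heq : (j2 a + 2*(j2 b)*sqrt2)
        - (((a.appr 3 : ℕ):Z2Sqrt2) + 2*((b.appr 1 : ℕ):Z2Sqrt2)*sqrt2)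
        = 8*(j2 c) + 4*sqrt2*(j2 d) := by
      linear_combination hcj + 2*sqrt2*hdj
    rw [heq]
    exact div85 _ _
  interval_cases hr : (a.appr 3) <;> interval_cases he : (b.appr 1)
  -- case r=0, eps=0
  · obtain ⟨z, hz⟩ := repAux hk hm 2 1 _ (shift_res hres _ (-1) (-1) (by push_cast; ring))
    refine ⟨![1+sqrt2, 1+sqrt2, 1, z, 0, 0], ?_⟩
    push_cast at hz
    simp [Fin.sum_univ_six, vec6_5, zero_pow hk0]
    linear_combination hz
  -- case r=0, eps=1
  · obtain ⟨z, hz⟩ := repAux hk hm 1 4 _ (shift_res hres _ (-1) 0 (by push_cast; ring))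
    refine ⟨![1+sqrt2, 1, 1, 1, 1, z], ?_⟩
    push_cast at hz
    simp [Fin.sum_univ_six, vec6_5, zero_pow hk0]
    linear_combination hz
  -- case r=1, eps=0
  · obtain ⟨z, hz⟩ := repAux hk hm 0 0 _ (shift_res hres _ 0 0 (by push_cast; ring))
    refine ⟨![z, 0, 0, 0, 0, 0], ?_⟩
    push_cast at hz
    simp [Fin.sum_univ_six, vec6_5, zero_pow hk0]
    linear_combination hz
  -- case r=1, eps=1
  · obtain ⟨z, hz⟩ := repAux3 hk hm _ (shift_res hres _ (-1) (-1) (by push_cast; ring))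
    refine ⟨![1+sqrt2, 1+sqrt2, z, 0, 0, 0], ?_⟩
    simp [Fin.sum_univ_six, vec6_5, zero_pow hk0]
    linear_combination hz
  -- case r=2, eps=0
  · obtain ⟨z, hz⟩ := repAux hk hm 0 1 _ (shift_res hres _ 0 0 (by push_cast; ring))
    refine ⟨![1, z, 0, 0, 0, 0], ?_⟩
    push_cast at hz
    simp [Fin.sum_univ_six, vec6_5, zero_pow hk0]
    linear_combination hz
  -- case r=2, eps=1
  · obtain ⟨z, hz⟩ := repAux hk hm 3 0 _ (shift_res hres _ (-1) (-1) (by push_cast; ring))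
    refine ⟨![1+sqrt2, 1+sqrt2, 1+sqrt2, z, 0, 0], ?_⟩
    push_cast at hz
    simp [Fin.sum_univ_six, vec6_5, zero_pow hk0]
    linear_combination hz
  -- case r=3, eps=0
  · obtain ⟨z, hz⟩ := repAux hk hm 0 2 _ (shift_res hres _ 0 0 (by push_cast; ring))
    refine ⟨![1, 1, z, 0, 0, 0], ?_⟩
    push_cast at hz
    simp [Fin.sum_univ_six, vec6_5, zero_pow hk0]
    linear_combination hz
  -- case r=3, eps=1
  · obtain ⟨z, hz⟩ := repAux hk hm 3 1 _ (shift_res hres _ (-1) (-1) (by push_cast; ring))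
    refine ⟨![1+sqrt2, 1+sqrt2, 1+sqrt2, 1, z, 0], ?_⟩
    push_cast at hz
    simp [Fin.sum_univ_six, vec6_5, zero_pow hk0]
    linear_combination hz
  -- case r=4, eps=0
  · obtain ⟨z, hz⟩ := repAux hk hm 0 3 _ (shift_res hres _ 0 0 (by push_cast; ring))
    refine ⟨![1, 1, 1, z, 0, 0], ?_⟩
    push_cast at hz
    simp [Fin.sum_univ_six, vec6_5, zero_pow hk0]
    linear_combination hz
  -- case r=4, eps=1
  · obtain ⟨z, hz⟩ := repAux hk hm 1 0 _ (shift_res hres _ 0 0 (by push_cast; ring))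
    refine ⟨![1+sqrt2, z, 0, 0, 0, 0], ?_⟩
    push_cast at hz
    simp [Fin.sum_univ_six, vec6_5, zero_pow hk0]
    linear_combination hz
  -- case r=5, eps=0
  · obtain ⟨z, hz⟩ := repAux hk hm 0 4 _ (shift_res hres _ 0 0 (by push_cast; ring))
    refine ⟨![1, 1, 1, 1, z, 0], ?_⟩
    push_cast at hz
    simp [Fin.sum_univ_six, vec6_5, zero_pow hk0]
    linear_combination hz
  -- case r=5, eps=1
  · obtain ⟨z, hz⟩ := repAux hk hm 1 1 _ (shift_res hres _ 0 0 (by push_cast; ring))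
    refine ⟨![1+sqrt2, 1, z, 0, 0, 0], ?_⟩
    push_cast at hz
    simp [Fin.sum_univ_six, vec6_5, zero_pow hk0]
    linear_combination hz
  -- case r=6, eps=0
  · obtain ⟨z, hz⟩ := repAux hk hm 0 5 _ (shift_res hres _ 0 0 (by push_cast; ring))
    refine ⟨![1, 1, 1, 1, 1, z], ?_⟩
    push_cast at hz
    simp [Fin.sum_univ_six, vec6_5, zero_pow hk0]
    linear_combination hz
  -- case r=6, eps=1
  · obtain ⟨z, hz⟩ := repAux hk hm 1 2 _ (shift_res hres _ 0 0 (by push_cast; ring))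
    refine ⟨![1+sqrt2, 1, 1, z, 0, 0], ?_⟩
    push_cast at hz
    simp [Fin.sum_univ_six, vec6_5, zero_pow hk0]
    linear_combination hz
  -- case r=7, eps=0
  · obtain ⟨z, hz⟩ := repAux hk hm 2 0 _ (shift_res hres _ 0 (-1) (by push_cast; ring))
    refine ⟨![1+sqrt2, 1+sqrt2, z, 0, 0, 0], ?_⟩
    push_cast at hz
    simp [Fin.sum_univ_six, vec6_5, zero_pow hk0]
    linear_combination hz
  -- case r=7, eps=1
  · obtain ⟨z, hz⟩ := repAux hk hm 1 3 _ (shift_res hres _ 0 0 (by push_cast; ring))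
    refine ⟨![1+sqrt2, 1, 1, 1, z, 0], ?_⟩
    push_cast at hz
    simp [Fin.sum_univ_six, vec6_5, zero_pow hk0]
    linear_combination hz

/-- For `k ≡ 2 mod 4` with `k ≥ 6`: every element of the additive semigroup generated by the
`k`-th powers of `ℤ_2[√2]` is a sum of at most 6 `k`-th powers, `(√2)³` is not a sum of at most
five `k`-th powers, and hence `g_{ℤ_2[√2]}(k) = 6`. -/
theorem gZ2sqrt2_k (k : ℕ) (hk4 : k % 4 = 2) (hk : 6 ≤ k) :
    (∀ x ∈ AddSubsemigroup.closure {y : Z2Sqrt2 | ∃ z : Z2Sqrt2, z ^ k = y},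
      ∃ f : Fin 6 → Z2Sqrt2, x = ∑ i, f i ^ k) ∧
    (¬ ∃ f : Fin 5 → Z2Sqrt2, sqrt2 ^ 3 = ∑ i, f i ^ k) ∧
    waringNumber Z2Sqrt2 k = 6 := by
  have hm2 : k = 2*(k/2) := by omega
  have hmodd : Odd (k/2) := by rw [Nat.odd_iff]; omega
  have part1 : ∀ x ∈ AddSubsemigroup.closure {y : Z2Sqrt2 | ∃ z : Z2Sqrt2, z ^ k = y},
      ∃ f : Fin 6 → Z2Sqrt2, x = ∑ i, f i ^ k := by
    intro x hx
    obtain ⟨a, b, rfl⟩ := closureS hm2 hx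
    exact allS hm2 hmodd hk a b
  have part2 : ¬ ∃ f : Fin 5 → Z2Sqrt2, sqrt2 ^ 3 = ∑ i, f i ^ k := by
    rintro ⟨f, hf⟩
    exact lower hm2 hmodd hk 5 le_rfl f hf
  refine ⟨part1, part2, ?_⟩
  have h6 : 6 ∈ {g | 0 < g ∧ ∀ x ∈ AddSubsemigroup.closure
      {y : Z2Sqrt2 | ∃ z : Z2Sqrt2, z ^ k = y}, ∃ f : Fin g → Z2Sqrt2, x = ∑ i, f i ^ k} :=
    ⟨by norm_num, part1⟩
  have hmemcl : sqrt2 ^ 3 ∈ AddSubsemigroup.closure {y : Z2Sqrt2 | ∃ z : Z2Sqrt2, z ^ k = y} := by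
    have h3 : sqrt2^3 = j2 0 + 2*(j2 1)*sqrt2 := by
      simp only [map_zero, map_one]
      linear_combination sqrt2*sq2
    obtain ⟨f, hf⟩ := allS hm2 hmodd hk 0 1
    rw [h3, hf, Fin.sum_univ_six]
    have hg : ∀ i : Fin 6, f i ^ k ∈ {y : Z2Sqrt2 | ∃ z : Z2Sqrt2, z ^ k = y} :=
      fun i => ⟨f i, rfl⟩
    exact AddSubsemigroup.add_mem _ (AddSubsemigroup.add_mem _ (AddSubsemigroup.add_mem _
      (AddSubsemigroup.add_mem _ (AddSubsemigroup.add_mem _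
        (AddSubsemigroup.subset_closure (hg 0)) (AddSubsemigroup.subset_closure (hg 1)))
        (AddSubsemigroup.subset_closure (hg 2))) (AddSubsemigroup.subset_closure (hg 3)))
        (AddSubsemigroup.subset_closure (hg 4))) (AddSubsemigroup.subset_closure (hg 5))
  rw [waringNumber]
  refine le_antisymm (Nat.sInf_le h6) (le_csInf ⟨6, h6⟩ ?_)
  intro g hg
  by_contra hlt
  push_neg at hlt
  obtain ⟨f, hf⟩ := hg.2 (sqrt2 ^ 3) hmemcl
  exact lower hm2 hmodd hk g (by omega) f hf
end
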